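/- arXiv:2406.09517 — 13 statements merged into one kernel-verified Lean document; each statement's English description precedes it below -/
import Mathlib

section
/- If real numbers a, b, c, d satisfy a ≥ b ≥ c ≥ d > 0 and a + b + c + d = 1, then (a + 2b + 3c + 4d) · a^a · b^b · c^c · d^d < 1. -/
theorem stmt_0 (a b c d : ℝ) (hab : a ≥ b) (hbc : b ≥ c) (hcd : c ≥ d)
    (hd : d > 0) (hsum : a + b + c + d = 1) :
    (a + 2*b + 3*c + 4*d) * (a ^ a * b ^ b * c ^ c * d ^ d) < 1 := by
  have hc : c > 0 := lt_of_lt_of_le hd hcd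
  have hb : b > 0 := lt_of_lt_of_le hc hbc
  have ha : a > 0 := lt_of_lt_of_le hb hab
  have hgm : a ^ a * b ^ b * c ^ c * d ^ d ≤ a*a + b*b + c*c + d*d :=
    Real.geom_mean_le_arith_mean4_weighted ha.le hb.le hc.le hd.le ha.le hb.le hc.le hd.le hsum
  have hx : 0 < a + 2*b + 3*c + 4*d := by nlinarith
  have hpoly : (a + 2*b + 3*c + 4*d) * (a*a + b*b + c*c + d*d) < 1 := by
    have h1 : a^2*(b-d) ≥ 0 := mul_nonneg (sq_nonneg a) (by linarith)
    have h2 : b^2*(2*a-b-d) ≥ 0 := mul_nonneg (sq_nonneg b) (by linarith)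
    have h3 : c^2*(2*a+b-2*c-d) ≥ 0 := mul_nonneg (sq_nonneg c) (by linarith)
    have h4 : d^2*(2*a+b-3*d) ≥ 0 := mul_nonneg (sq_nonneg d) (by linarith)
    have h5 : a*b*c > 0 := by positivity
    have h6 : a*b*d > 0 := by positivity
    have h7 : a*c*d > 0 := by positivity
    have h8 : b*c*d > 0 := by positivity
    have key : (a+b+c+d)^3 - (a+2*b+3*c+4*d)*(a*a+b*b+c*c+d*d)
        = a^2*(b-d) + b^2*(2*a-b-d) + c^2*(2*a+b-2*c-d) + d^2*(2*a+b-3*d)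
          + 6*(a*b*c+a*b*d+a*c*d+b*c*d) := by ring
    have hone : (a+b+c+d)^3 = 1 := by rw [hsum]; ring
    nlinarith [key]
  calc (a + 2*b + 3*c + 4*d) * (a ^ a * b ^ b * c ^ c * d ^ d)
      ≤ (a + 2*b + 3*c + 4*d) * (a*a + b*b + c*c + d*d) := by
        exact mul_le_mul_of_nonneg_left hgm hx.le
    _ < 1 := hpoly
end

section
/- If real numbers a, b, c, d satisfy a > 0, b > 0, c > 0, d > 0 and a + b + c + d = 1, then a^a · b^b · c^c · d^d ≤ a² + b² + c² + d². -/
theorem stmt_1 (a b c d : ℝ) (ha : a > 0) (hb : b > 0) (hc : c > 0) (hd : d > 0)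
    (hsum : a + b + c + d = 1) :
    a ^ a * b ^ b * c ^ c * d ^ d ≤ a ^ 2 + b ^ 2 + c ^ 2 + d ^ 2 := by
  have h := Real.geom_mean_le_arith_mean4_weighted ha.le hb.le hc.le hd.le
    ha.le hb.le hc.le hd.le hsum
  calc a ^ a * b ^ b * c ^ c * d ^ d ≤ a * a + b * b + c * c + d * d := h
    _ = a ^ 2 + b ^ 2 + c ^ 2 + d ^ 2 := by ring
end

section
/- If real numbers a, b, c, d satisfy a ≥ b ≥ c ≥ d > 0, then (a + 2b + 3c + 4d)(a² + b² + c² + d²) < (a + b + c + d)³. -/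
theorem stmt_2 (a b c d : ℝ) (hab : a ≥ b) (hbc : b ≥ c) (hcd : c ≥ d) (hd : d > 0) :
    (a + 2*b + 3*c + 4*d) * (a ^ 2 + b ^ 2 + c ^ 2 + d ^ 2) < (a + b + c + d) ^ 3 := by
  nlinarith [mul_pos hd hd, mul_pos (lt_of_lt_of_le hd hcd) hd, mul_pos (hd.trans_le (hcd.trans hbc)) hd, sq_nonneg (a-b), sq_nonneg (b-c), sq_nonneg (c-d), mul_nonneg (sub_nonneg.2 hab) (sub_nonneg.2 hbc), mul_nonneg (sub_nonneg.2 hbc) (sub_nonneg.2 hcd), mul_pos (hd.trans_le hcd) (hd.trans_le hcd), mul_nonneg (mul_nonneg (sub_nonneg.2 hab) (sub_nonneg.2 hbc)) hd.le, mul_nonneg (mul_nonneg (sub_nonneg.2 hab) (sub_nonneg.2 hcd)) hd.le, mul_nonneg (mul_nonneg (sub_nonneg.2 hbc) (sub_nonneg.2 hcd)) hd.le, mul_pos (mul_pos hd hd) hd]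
end

section
/- For nonnegative reals r, s, t and positive real u, (r + 3s + 6t + 10u)·(r² + 2s² + 3t² + 4u² + 2rs + 2rt + 2ru + 4st + 4su + 6tu) < (r + 2s + 3t + 4u)³. -/
theorem stmt_3 (r s t u : ℝ) (hr : 0 ≤ r) (hs : 0 ≤ s) (ht : 0 ≤ t) (hu : 0 < u) :
    (r + 3*s + 6*t + 10*u) *
      (r^2 + 2*s^2 + 3*t^2 + 4*u^2 + 2*r*s + 2*r*t + 2*r*u + 4*s*t + 4*s*u + 6*t*u)
    < (r + 2*s + 3*t + 4*u) ^ 3 := by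
  nlinarith [mul_nonneg hr hs, mul_nonneg hr ht, mul_nonneg hs ht, mul_nonneg (mul_nonneg hr hs) ht, sq_nonneg r, sq_nonneg s, sq_nonneg t, mul_pos hu hu, mul_nonneg hr hu.le, mul_nonneg hs hu.le, mul_nonneg ht hu.le, mul_pos (mul_pos hu hu) hu, mul_nonneg (mul_nonneg hr hr) hu.le, mul_nonneg (mul_nonneg hs hs) hu.le, mul_nonneg (mul_nonneg ht ht) hu.le]
end

section
/- Let n ≥ 1 and let G be a multigraph on n vertices in which every vertex has degree exactly 4 (self-loops counted with multiplicity 2). Then the edges of G can be 2-colored (blue/green) so that every vertex is incident to exactly two blue edge-endpoints and two green edge-endpoints. -/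
open Finset

/-- The multiplicity with which a vertex `v` occurs as an endpoint of an edge
with endpoint pair `e` (a self-loop at `v` counts twice). -/
def endpointMult {V : Type*} [DecidableEq V] (v : V) (e : Sym2 V) : ℕ :=
  if e = Sym2.diag v then 2 else if v ∈ e then 1 else 0

lemma endpointMult_mk {V : Type*} [DecidableEq V] (v a b : V) :
    endpointMult v s(a, b) = (if a = v then 1 else 0) + (if b = v then 1 else 0) := by
  unfold endpointMult Sym2.diag
  by_cases ha : a = v <;> by_cases hb : b = v <;>
    simp [Sym2.eq_iff, Sym2.mem_iff, ha, hb] <;> tauto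

lemma fin2_card_filter_lt (k : ℕ) (hk : k ≤ 2) :
    ((univ : Finset (Fin 2)).filter fun i : Fin 2 => (i : ℕ) < k).card = k := by
  interval_cases k <;> decide

/-- Every `4`-regular multigraph has an orientation with out-degree and
in-degree equal to `2` at every vertex. -/
lemma exists_orientation {n : ℕ} {E : Type*} [Fintype E] (ends : E → Sym2 (Fin n))
    (hdeg : ∀ v : Fin n, ∑ e : E, endpointMult v (ends e) = 4) :
    ∃ dir : E → Fin n × Fin n,
      (∀ e, ends e = s((dir e).1, (dir e).2)) ∧
      (∀ v, ∑ e : E, (if (dir e).1 = v then 1 else 0) = 2) ∧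
      (∀ v, ∑ e : E, (if (dir e).2 = v then 1 else 0) = 2) := by
  classical
  -- choose a representative ordered pair for each edge
  have hrep : ∀ e : E, ∃ pr : Fin n × Fin n, s(pr.1, pr.2) = ends e := by
    intro e
    induction ends e using Sym2.ind with
    | _ x y => exact ⟨(x, y), rfl⟩
  choose p hp using hrep
  set m : Fin n → E → ℕ := fun v e =>
    (if (p e).1 = v then 1 else 0) + (if (p e).2 = v then 1 else 0) with hm_def
  have hm : ∀ v e, endpointMult v (ends e) = m v e := by
    intro v e
    rw [← hp e, endpointMult_mk]
  have hdeg' : ∀ v, ∑ e : E, m v e = 4 := by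
    intro v
    rw [← hdeg v]
    exact Finset.sum_congr rfl fun e _ => (hm v e).symm
  set q : E → Prop := fun e => (p e).1 = (p e).2 with hq_def
  set loopv : Fin n → ℕ := fun v =>
    ∑ e ∈ univ.filter fun e => q e, (if (p e).1 = v then 1 else 0) with hloopv_def
  set NLd : Fin n → ℕ := fun v => ∑ e ∈ univ.filter fun e => ¬ q e, m v e with hNLd_def
  have hsplit : ∀ v, NLd v + 2 * loopv v = 4 := by
    intro v
    have h1 : (∑ e ∈ univ.filter fun e => q e, m v e) + NLd v = 4 := by
      show (∑ e ∈ univ.filter fun e => q e, m v e)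
        + (∑ e ∈ univ.filter fun e => ¬ q e, m v e) = 4
      rw [Finset.sum_filter_add_sum_filter_not]
      exact hdeg' v
    have h2 : (∑ e ∈ univ.filter fun e => q e, m v e) = 2 * loopv v := by
      rw [hloopv_def, Finset.mul_sum]
      refine Finset.sum_congr rfl fun e he => ?_
      have hqe : (p e).1 = (p e).2 := (Finset.mem_filter.mp he).2
      simp only [hm_def, ← hqe]
      ring
    omega
  set c : Fin n → ℕ := fun v => 2 - loopv v with hc_def
  have hloople : ∀ v, loopv v ≤ 2 := fun v => by have := hsplit v; omega
  have hNLdc : ∀ v, NLd v = 2 * c v := fun v => by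
    have := hsplit v; have := hloople v; simp only [hc_def]; omega
  have hcle : ∀ v, c v ≤ 2 := fun v => by simp only [hc_def]; omega
  -- slots
  set slots : Fin n → Finset (Fin n × Fin 2) := fun w =>
    ({w} : Finset (Fin n)) ×ˢ (univ.filter fun i : Fin 2 => (i : ℕ) < c w) with hslots_def
  have hslots_card : ∀ w, (slots w).card = c w := by
    intro w
    rw [hslots_def]
    simp only [Finset.card_product, Finset.card_singleton, one_mul]
    exact fin2_card_filter_lt (c w) (hcle w)
  have hslots_mem : ∀ w a, a ∈ slots w → a.1 = w := by
    intro w a ha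
    rw [hslots_def] at ha
    simp only [Finset.mem_product, Finset.mem_singleton] at ha
    exact ha.1
  have hslots_disj : ∀ w w', w ≠ w' → Disjoint (slots w) (slots w') := by
    intro w w' hww
    rw [Finset.disjoint_left]
    intro a haw haw'
    exact hww ((hslots_mem w a haw).symm.trans (hslots_mem w' a haw'))
  -- Hall on non-loop edges
  set t : {e : E // ¬ q e} → Finset (Fin n × Fin 2) := fun e =>
    slots (p e.1).1 ∪ slots (p e.1).2 with ht_def
  have hall : ∀ s : Finset {e : E // ¬ q e}, s.card ≤ (s.biUnion t).card := by
    intro s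
    set U : Finset (Fin n) := s.biUnion (fun e => {(p e.1).1, (p e.1).2}) with hU_def
    have hUt : s.biUnion t = U.biUnion slots := by
      ext a
      simp only [Finset.mem_biUnion, hU_def, ht_def, Finset.mem_union,
        Finset.mem_insert, Finset.mem_singleton]
      constructor
      · rintro ⟨e, he, h | h⟩
        · exact ⟨(p e.1).1, ⟨e, he, Or.inl rfl⟩, h⟩
        · exact ⟨(p e.1).2, ⟨e, he, Or.inr rfl⟩, h⟩
      · rintro ⟨w, ⟨e, he, hw⟩, ha⟩
        refine ⟨e, he, ?_⟩
        rcases hw with rfl | rfl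
        · exact Or.inl ha
        · exact Or.inr ha
    have hcard : (s.biUnion t).card = ∑ w ∈ U, c w := by
      rw [hUt, Finset.card_biUnion (fun w _ w' _ h => hslots_disj w w' h)]
      exact Finset.sum_congr rfl fun w _ => hslots_card w
    rw [hcard]
    -- key counting inequality
    have hkey : 2 * s.card ≤ ∑ w ∈ U, 2 * c w := by
      calc 2 * s.card = ∑ e ∈ s.image Subtype.val, 2 := by
            rw [Finset.sum_const, Finset.card_image_of_injective _ Subtype.val_injective,
              smul_eq_mul]
            ring
        _ = ∑ e ∈ s.image Subtype.val, ∑ w ∈ U, m w e := by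
            refine Finset.sum_congr rfl fun e he => ?_
            obtain ⟨e', he', rfl⟩ := Finset.mem_image.mp he
            have h1U : (p e'.1).1 ∈ U := by
              rw [hU_def]
              exact Finset.mem_biUnion.mpr ⟨e', he', by simp⟩
            have h2U : (p e'.1).2 ∈ U := by
              rw [hU_def]
              exact Finset.mem_biUnion.mpr ⟨e', he', by simp⟩
            simp only [hm_def, Finset.sum_add_distrib, Finset.sum_ite_eq' U,
              Finset.sum_ite_eq U, h1U, h2U, if_true]
        _ = ∑ w ∈ U, ∑ e ∈ s.image Subtype.val, m w e := Finset.sum_comm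
        _ ≤ ∑ w ∈ U, NLd w := by
            refine Finset.sum_le_sum fun w _ => ?_
            rw [hNLd_def]
            refine Finset.sum_le_sum_of_subset ?_
            intro e he
            obtain ⟨e', _, rfl⟩ := Finset.mem_image.mp he
            simp only [Finset.mem_filter, Finset.mem_univ, true_and]
            exact e'.2
        _ = ∑ w ∈ U, 2 * c w := Finset.sum_congr rfl fun w _ => (hNLdc w)
    have hms : ∑ w ∈ U, 2 * c w = 2 * ∑ w ∈ U, c w := by rw [Finset.mul_sum]
    omega
  obtain ⟨f, hfinj, hft⟩ :=
    (Finset.all_card_le_biUnion_card_iff_exists_injective t).mp hall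
  have hf1 : ∀ e : {e : E // ¬ q e},
      (f e).1 = (p e.1).1 ∨ (f e).1 = (p e.1).2 := by
    intro e
    rcases Finset.mem_union.mp (hft e) with h | h
    · exact Or.inl (hslots_mem _ _ h)
    · exact Or.inr (hslots_mem _ _ h)
  have hfslot : ∀ e : {e : E // ¬ q e}, f e ∈ slots (f e).1 := by
    intro e
    rcases Finset.mem_union.mp (hft e) with h | h
    · have h1 := hslots_mem _ _ h
      rw [h1]; exact h
    · have h1 := hslots_mem _ _ h
      rw [h1]; exact h
  -- the fibers of (f ·).1 have cardinality exactly c v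
  set fib : Fin n → ℕ := fun v =>
    ((univ : Finset {e : E // ¬ q e}).filter fun e => (f e).1 = v).card with hfib_def
  have hfible : ∀ v, fib v ≤ c v := by
    intro v
    rw [hfib_def, ← hslots_card v]
    refine Finset.card_le_card_of_injOn f ?_ ?_
    · intro e he
      have h1 := hfslot e
      rwa [(Finset.mem_filter.mp he).2] at h1
    · intro a _ b _ hab
      exact hfinj hab
  have hfibsum : ∑ v, fib v = Fintype.card {e : E // ¬ q e} := by
    rw [← Finset.card_univ]
    exact (Finset.card_eq_sum_card_fiberwise
      (fun e _ => Finset.mem_univ ((f e).1))).symm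
  have hcsum : ∑ v, c v = Fintype.card {e : E // ¬ q e} := by
    have h2 : 2 * ∑ v, c v = 2 * Fintype.card {e : E // ¬ q e} := by
      calc 2 * ∑ v, c v = ∑ v, 2 * c v := by rw [Finset.mul_sum]
        _ = ∑ v, NLd v := Finset.sum_congr rfl fun v _ => (hNLdc v).symm
        _ = ∑ e ∈ univ.filter fun e => ¬ q e, ∑ v, m v e := Finset.sum_comm
        _ = ∑ e ∈ univ.filter fun e => ¬ q e, 2 := by
            refine Finset.sum_congr rfl fun e _ => ?_
            simp [hm_def, Finset.sum_add_distrib, Finset.sum_ite_eq' univ,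
              Finset.sum_ite_eq univ]
        _ = 2 * (univ.filter fun e => ¬ q e).card := by
            rw [Finset.sum_const, smul_eq_mul]; ring
        _ = 2 * Fintype.card {e : E // ¬ q e} := by
            rw [Fintype.card_subtype]
    omega
  have hfibeq : ∀ v, fib v = c v := by
    have h3 := (Finset.sum_eq_sum_iff_of_le (fun v (_ : v ∈ univ) => hfible v)).mp
      (by rw [hfibsum, hcsum])
    exact fun v => h3 v (Finset.mem_univ v)
  -- define the orientation
  set dir : E → Fin n × Fin n := fun e =>
    if h : q e then p e
    else if (f ⟨e, h⟩).1 = (p e).1 then p e else ((p e).2, (p e).1) with hdir_def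
  have hdirq : ∀ e, ∀ h : q e, dir e = p e := fun e h => dif_pos h
  have hdirn : ∀ e, ∀ h : ¬ q e,
      dir e = if (f ⟨e, h⟩).1 = (p e).1 then p e else ((p e).2, (p e).1) :=
    fun e h => dif_neg h
  have hdir_ends : ∀ e, ends e = s((dir e).1, (dir e).2) := by
    intro e
    by_cases h : q e
    · rw [hdirq e h, ← hp e]
    · rw [hdirn e h]
      by_cases h2 : (f ⟨e, h⟩).1 = (p e).1
      · rw [if_pos h2, ← hp e]
      · rw [if_neg h2, ← hp e]
        exact Sym2.eq_swap
  have hdir1 : ∀ e : {e : E // ¬ q e}, (dir e.1).1 = (f e).1 := by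
    intro e
    obtain ⟨e, h⟩ := e
    show (dir e).1 = (f ⟨e, h⟩).1
    rw [hdirn e h]
    by_cases h2 : (f ⟨e, h⟩).1 = (p e).1
    · rw [if_pos h2]
      exact h2.symm
    · rw [if_neg h2]
      rcases hf1 ⟨e, h⟩ with h3 | h3
      · exact absurd h3 h2
      · exact h3.symm
  have hout : ∀ v, ∑ e : E, (if (dir e).1 = v then 1 else 0) = 2 := by
    intro v
    have hsplit2 : ∑ e : E, (if (dir e).1 = v then 1 else 0)
        = (∑ e ∈ univ.filter fun e => q e, (if (dir e).1 = v then 1 else 0))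
          + ∑ e ∈ univ.filter fun e => ¬ q e, (if (dir e).1 = v then 1 else 0) :=
      (Finset.sum_filter_add_sum_filter_not _ _ _).symm
    have hA : (∑ e ∈ univ.filter fun e => q e, (if (dir e).1 = v then 1 else 0))
        = loopv v := by
      rw [hloopv_def]
      refine Finset.sum_congr rfl fun e he => ?_
      have hqe : q e := (Finset.mem_filter.mp he).2
      rw [hdirq e hqe]
    have hB : (∑ e ∈ univ.filter fun e => ¬ q e, (if (dir e).1 = v then 1 else 0))
        = fib v := by
      have hsub : (∑ e ∈ univ.filter fun e => ¬ q e, (if (dir e).1 = v then 1 else 0))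
          = ∑ e : {e : E // ¬ q e}, (if (dir e.1).1 = v then 1 else 0) :=
        Finset.sum_subtype _ (fun e => by simp) _
      have hcf : fib v = ∑ e : {e : E // ¬ q e}, (if (f e).1 = v then 1 else 0) :=
        Finset.card_filter _ _
      rw [hsub, hcf]
      refine Finset.sum_congr rfl fun e _ => ?_
      rw [hdir1 e]
    rw [hsplit2, hA, hB, hfibeq v]
    have h4 := hloople v
    simp only [hc_def]
    omega
  have htot : ∀ v, (∑ e : E, (if (dir e).1 = v then 1 else 0))
      + (∑ e : E, (if (dir e).2 = v then 1 else 0)) = 4 := by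
    intro v
    have h5 : ∀ e : E, (if (dir e).1 = v then 1 else 0) + (if (dir e).2 = v then 1 else 0)
        = endpointMult v (ends e) := by
      intro e
      rw [hdir_ends e, endpointMult_mk]
    rw [← Finset.sum_add_distrib, Finset.sum_congr rfl (fun e _ => h5 e), hdeg]
  refine ⟨dir, hdir_ends, hout, fun v => ?_⟩
  have h6 := htot v
  have h7 := hout v
  omega

/-- A balanced `(2,2)`-orientation splits into two balanced `(1,1)`-orientations. -/
lemma exists_split {n : ℕ} {E : Type*} [Fintype E] (dir : E → Fin n × Fin n)
    (hout : ∀ v, ∑ e : E, (if (dir e).1 = v then 1 else 0) = 2)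
    (hin : ∀ v, ∑ e : E, (if (dir e).2 = v then 1 else 0) = 2) :
    ∃ col : E → Bool, ∀ v, ∑ e : E,
      (if col e then (if (dir e).1 = v then 1 else 0) + (if (dir e).2 = v then 1 else 0)
        else 0) = 2 := by
  classical
  set t : Fin n → Finset (Fin n) := fun v =>
    (univ.filter fun e : E => (dir e).1 = v).image fun e => (dir e).2 with ht_def
  have hall : ∀ s : Finset (Fin n), s.card ≤ (s.biUnion t).card := by
    intro s
    set N := s.biUnion t with hN_def
    have h1 : (univ.filter fun e : E => (dir e).1 ∈ s).card = 2 * s.card := by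
      rw [Finset.card_filter]
      calc ∑ e : E, (if (dir e).1 ∈ s then 1 else 0)
          = ∑ e : E, ∑ v ∈ s, (if (dir e).1 = v then 1 else 0) := by
            refine Finset.sum_congr rfl fun e _ => ?_
            rw [Finset.sum_ite_eq s]
        _ = ∑ v ∈ s, ∑ e : E, (if (dir e).1 = v then 1 else 0) := Finset.sum_comm
        _ = ∑ v ∈ s, 2 := Finset.sum_congr rfl fun v _ => hout v
        _ = 2 * s.card := by rw [Finset.sum_const, smul_eq_mul]; ring
    have h2 : (univ.filter fun e : E => (dir e).2 ∈ N).card = 2 * N.card := by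
      rw [Finset.card_filter]
      calc ∑ e : E, (if (dir e).2 ∈ N then 1 else 0)
          = ∑ e : E, ∑ v ∈ N, (if (dir e).2 = v then 1 else 0) := by
            refine Finset.sum_congr rfl fun e _ => ?_
            rw [Finset.sum_ite_eq N]
        _ = ∑ v ∈ N, ∑ e : E, (if (dir e).2 = v then 1 else 0) := Finset.sum_comm
        _ = ∑ v ∈ N, 2 := Finset.sum_congr rfl fun v _ => hin v
        _ = 2 * N.card := by rw [Finset.sum_const, smul_eq_mul]; ring
    have hsub : (univ.filter fun e : E => (dir e).1 ∈ s)
        ⊆ (univ.filter fun e : E => (dir e).2 ∈ N) := by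
      intro e he
      have he1 : (dir e).1 ∈ s := (Finset.mem_filter.mp he).2
      simp only [Finset.mem_filter, Finset.mem_univ, true_and]
      rw [hN_def]
      refine Finset.mem_biUnion.mpr ⟨(dir e).1, he1, ?_⟩
      rw [ht_def]
      exact Finset.mem_image.mpr ⟨e, Finset.mem_filter.mpr ⟨Finset.mem_univ e, rfl⟩, rfl⟩
    have := Finset.card_le_card hsub
    omega
  obtain ⟨g, hginj, hgt⟩ :=
    (Finset.all_card_le_biUnion_card_iff_exists_injective t).mp hall
  have hgbij : Function.Bijective g := Finite.injective_iff_bijective.mp hginj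
  have hedge : ∀ v, ∃ e : E, (dir e).1 = v ∧ (dir e).2 = g v := by
    intro v
    have h1 := hgt v
    rw [ht_def] at h1
    obtain ⟨e, he, he2⟩ := Finset.mem_image.mp h1
    exact ⟨e, (Finset.mem_filter.mp he).2, he2⟩
  choose ev hev1 hev2 using hedge
  have hevinj : Function.Injective ev := by
    intro a b hab
    rw [← hev1 a, ← hev1 b, hab]
  refine ⟨fun e => decide (e ∈ Finset.image ev univ), fun v => ?_⟩
  have hco : ∀ e : E,
      (if decide (e ∈ Finset.image ev univ) = true
        then (if (dir e).1 = v then 1 else 0) + (if (dir e).2 = v then 1 else 0) else 0)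
      = (if e ∈ Finset.image ev univ
        then (if (dir e).1 = v then 1 else 0) + (if (dir e).2 = v then 1 else 0) else 0) := by
    intro e
    by_cases h : e ∈ Finset.image ev univ <;> simp [h]
  rw [Finset.sum_congr rfl fun e _ => hco e]
  rw [Finset.sum_ite_mem, Finset.univ_inter, Finset.sum_image (fun a _ b _ h => hevinj h)]
  have hterm : ∀ u, (if (dir (ev u)).1 = v then 1 else 0)
      + (if (dir (ev u)).2 = v then 1 else 0)
      = (if u = v then 1 else 0) + (if g u = v then 1 else 0) := by
    intro u
    rw [hev1 u, hev2 u]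
  rw [Finset.sum_congr rfl fun u _ => hterm u, Finset.sum_add_distrib]
  have hb : ∑ u : Fin n, (if g u = v then 1 else 0) = 1 := by
    rw [Fintype.sum_bijective g hgbij _ (fun w => if w = v then (1 : ℕ) else 0)
      (fun u => rfl)]
    rw [Finset.sum_ite_eq' univ]
    simp
  have ha : ∑ u : Fin n, (if u = v then (1 : ℕ) else 0) = 1 := by
    rw [Finset.sum_ite_eq' univ]
    simp
  rw [ha, hb]

theorem stmt_4 (n : ℕ) (hn : 1 ≤ n) (E : Type*) [Fintype E]
    (ends : E → Sym2 (Fin n))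
    (hdeg : ∀ v : Fin n, ∑ e : E, endpointMult v (ends e) = 4) :
    ∃ col : E → Bool,
      (∀ v : Fin n, ∑ e : E, (if col e then endpointMult v (ends e) else 0) = 2) ∧
      (∀ v : Fin n, ∑ e : E, (if col e then 0 else endpointMult v (ends e)) = 2) := by
  classical
  obtain ⟨dir, hdir, hout, hin⟩ := exists_orientation ends hdeg
  obtain ⟨col, hcol⟩ := exists_split dir hout hin
  have hm : ∀ v e, endpointMult v (ends e)
      = (if (dir e).1 = v then 1 else 0) + (if (dir e).2 = v then 1 else 0) := by
    intro v e
    rw [hdir e, endpointMult_mk]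
  have hblue : ∀ v : Fin n, ∑ e : E, (if col e then endpointMult v (ends e) else 0) = 2 := by
    intro v
    rw [← hcol v]
    refine Finset.sum_congr rfl fun e _ => ?_
    by_cases h : col e <;> simp [h, hm v e]
  refine ⟨col, hblue, fun v => ?_⟩
  have h1 : (∑ e : E, (if col e then endpointMult v (ends e) else 0))
      + (∑ e : E, (if col e then 0 else endpointMult v (ends e))) = 4 := by
    rw [← Finset.sum_add_distrib, ← hdeg v]
    refine Finset.sum_congr rfl fun e _ => ?_
    by_cases h : col e <;> simp [h]
  have h2 := hblue v
  omega
end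

section
/- Let n > 1. Given pebbles of weights 1, 2, ..., 4n, each colored with one of n colors so that exactly four pebbles have each color, the pebbles can be split into two piles of 2n pebbles each such that both piles have equal total weight and each pile contains exactly two pebbles of each color. -/
open Finset

theorem stmt_5 (n : ℕ) (hn : 1 < n) (c : Fin (4*n) → Fin n)
    (hc : ∀ j : Fin n, (Finset.univ.filter (fun i => c i = j)).card = 4) :
    ∃ S : Finset (Fin (4*n)),
      S.card = 2*n ∧
      (∑ i ∈ S, ((i : ℕ) + 1)) = n * (4*n + 1) ∧
      (∀ j : Fin n, (S.filter (fun i => c i = j)).card = 2) := by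
  classical
  -- the two pebbles of pair k : weights k+1 and 4n-k, summing to 4n+1
  set a : Fin (2*n) → Fin (4*n) := fun k => ⟨k.1, by have := k.2; omega⟩ with ha
  set b : Fin (2*n) → Fin (4*n) := fun k => ⟨4*n - 1 - k.1, by have := k.2; omega⟩ with hb
  have haval : ∀ k, (a k).1 = k.1 := fun k => rfl
  have hbval : ∀ k, (b k).1 = 4*n - 1 - k.1 := fun k => rfl
  have hane : ∀ k, a k ≠ b k := by
    intro k h
    have h1 := k.2
    have := congrArg Fin.val h
    simp only [haval, hbval] at this
    omega
  have hdisj : ∀ k k' : Fin (2*n), k ≠ k' →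
      Disjoint ({a k, b k} : Finset (Fin (4*n))) {a k', b k'} := by
    intro k k' hkk'
    have h1 := k.2; have h2 := k'.2
    have hkk'' : k.1 ≠ k'.1 := fun h => hkk' (Fin.ext h)
    simp only [Finset.disjoint_insert_left, Finset.disjoint_singleton_left,
      Finset.mem_insert, Finset.mem_singleton]
    constructor
    · rintro (h | h) <;>
        (have := congrArg Fin.val h; simp only [haval, hbval] at this; omega)
    · rintro (h | h) <;>
        (have := congrArg Fin.val h; simp only [haval, hbval] at this; omega)
  -- covering: every pebble is in some pair
  have hcover : (Finset.univ : Finset (Fin (4*n))) =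
      Finset.univ.biUnion (fun k : Fin (2*n) => {a k, b k}) := by
    ext i
    simp only [Finset.mem_univ, true_iff, Finset.mem_biUnion, Finset.mem_insert,
      Finset.mem_singleton]
    have hi := i.2
    by_cases h : i.1 < 2*n
    · exact ⟨⟨i.1, h⟩, trivial, Or.inl (Fin.ext rfl)⟩
    · refine ⟨⟨4*n - 1 - i.1, by omega⟩, trivial, Or.inr (Fin.ext ?_)⟩
      simp only [hbval]; omega
  have hsplit : ∀ (F : Fin (4*n) → ℕ),
      ∑ i : Fin (4*n), F i = ∑ k : Fin (2*n), (F (a k) + F (b k)) := by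
    intro F
    rw [show (∑ i : Fin (4*n), F i) = ∑ i ∈ Finset.univ.biUnion
        (fun k : Fin (2*n) => {a k, b k}), F i by rw [← hcover]]
    rw [Finset.sum_biUnion (fun x _ y _ hxy => hdisj x y hxy)]
    exact Finset.sum_congr rfl fun k _ => Finset.sum_pair (hane k)
  -- each color has 4 pebble-slots among the pairs
  have hc4 : ∀ v : Fin n, ∑ k : Fin (2*n),
      ((if c (a k) = v then 1 else 0) + (if c (b k) = v then 1 else 0)) = 4 := by
    intro v
    rw [← hsplit (fun i => if c i = v then 1 else 0)]
    rw [← Finset.card_filter]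
    exact hc v
  ------------------------------------------------------------------
  -- Step 1: Hall's theorem gives an orientation with out-degree 2
  ------------------------------------------------------------------
  set t1 : Fin (2*n) → Finset (Fin n × Fin 2) :=
    fun k => ({c (a k), c (b k)} : Finset (Fin n)) ×ˢ Finset.univ with ht1
  have hall1 : ∀ s : Finset (Fin (2*n)), s.card ≤ (s.biUnion t1).card := by
    intro s
    set V : Finset (Fin n) := s.biUnion (fun k => {c (a k), c (b k)}) with hV
    have hbU : s.biUnion t1 = V ×ˢ Finset.univ := by
      ext p
      simp only [ht1, hV, Finset.mem_biUnion, Finset.mem_product, Finset.mem_univ,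
        and_true, Finset.mem_insert, Finset.mem_singleton]
    have hcardbU : (s.biUnion t1).card = V.card * 2 := by
      rw [hbU, Finset.card_product, Finset.card_univ, Fintype.card_fin]
    -- pebbles of s all have colors in V
    have hfilt : (Finset.univ.filter (fun i => c i ∈ V)) =
        V.biUnion (fun j => Finset.univ.filter (fun i => c i = j)) := by
      ext i
      simp only [Finset.mem_filter, Finset.mem_univ, true_and, Finset.mem_biUnion]
      constructor
      · intro h; exact ⟨c i, h, rfl⟩
      · rintro ⟨j, hj, rfl⟩; exact hj
    have hfiltcard : (Finset.univ.filter (fun i => c i ∈ V)).card = 4 * V.card := by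
      rw [hfilt, Finset.card_biUnion]
      · rw [Finset.sum_congr rfl (fun j _ => hc j)]
        simp [mul_comm]
      · intro x _ y _ hxy
        simp only [Finset.disjoint_left, Finset.mem_filter]
        rintro i ⟨_, rfl⟩ ⟨_, h⟩
        exact hxy h
    set P : Finset (Fin (4*n)) := s.biUnion (fun k => {a k, b k}) with hP
    have hPcard : P.card = 2 * s.card := by
      rw [hP, Finset.card_biUnion (fun x _ y _ hxy => hdisj x y hxy)]
      rw [Finset.sum_congr rfl (fun k _ => Finset.card_pair (hane k))]
      simp [mul_comm]
    have hPsub : P ⊆ Finset.univ.filter (fun i => c i ∈ V) := by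
      intro i hi
      rw [hP, Finset.mem_biUnion] at hi
      obtain ⟨k, hk, hik⟩ := hi
      simp only [Finset.mem_insert, Finset.mem_singleton] at hik
      simp only [Finset.mem_filter, Finset.mem_univ, true_and, hV, Finset.mem_biUnion]
      rcases hik with rfl | rfl
      · exact ⟨k, hk, by simp⟩
      · exact ⟨k, hk, by simp⟩
    have := Finset.card_le_card hPsub
    rw [hPcard, hfiltcard] at this
    omega
  obtain ⟨g, hginj, hgmem⟩ :=
    (Finset.all_card_le_biUnion_card_iff_exists_injective t1).mp hall1
  have hgbij : Function.Bijective g := by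
    rw [Fintype.bijective_iff_injective_and_card]
    refine ⟨hginj, by simp [mul_comm]⟩
  -- tail/head pebbles of each oriented pair
  set tp : Fin (2*n) → Fin (4*n) := fun k => if (g k).1 = c (a k) then a k else b k with htp
  set hp : Fin (2*n) → Fin (4*n) := fun k => if (g k).1 = c (a k) then b k else a k with hhp
  have htail : ∀ k, c (tp k) = (g k).1 := by
    intro k
    have := hgmem k
    simp only [ht1, Finset.mem_product, Finset.mem_insert, Finset.mem_singleton] at this
    by_cases h : (g k).1 = c (a k)
    · simp only [htp, if_pos h]; exact h.symm
    · rcases this.1 with h' | h'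
      · exact absurd h' h
      · simp only [htp, if_neg h]; exact h'.symm
  have hindk : ∀ (k : Fin (2*n)) (v : Fin n),
      ((if c (tp k) = v then 1 else 0) + (if c (hp k) = v then 1 else 0) : ℕ) =
      (if c (a k) = v then 1 else 0) + (if c (b k) = v then 1 else 0) := by
    intro k v
    by_cases h : (g k).1 = c (a k)
    · simp only [htp, hhp, if_pos h]
    · simp only [htp, hhp, if_neg h]
      exact Nat.add_comm _ _
  -- out-degree is 2
  have hout : ∀ v : Fin n, (Finset.univ.filter (fun k => c (tp k) = v)).card = 2 := by
    intro v
    have h1 : (Finset.univ.filter (fun k => c (tp k) = v)) =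
        Finset.univ.filter (fun k => (g k).1 = v) := by
      ext k; simp [htail k]
    rw [h1]
    have h2 : (Finset.univ.filter (fun k : Fin (2*n) => (g k).1 = v)).card =
        (Finset.univ.filter (fun p : Fin n × Fin 2 => p.1 = v)).card := by
      apply Finset.card_bij (fun k _ => g k)
      · intro k hk
        simp only [Finset.mem_filter, Finset.mem_univ, true_and] at hk ⊢
        exact hk
      · intro x _ y _ h; exact hginj h
      · intro p hp'
        simp only [Finset.mem_filter, Finset.mem_univ, true_and] at hp'
        obtain ⟨k, rfl⟩ := hgbij.2 p
        exact ⟨k, by simp [hp'], rfl⟩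
    rw [h2]
    have h3 : (Finset.univ.filter (fun p : Fin n × Fin 2 => p.1 = v)) =
        ({v} : Finset (Fin n)) ×ˢ Finset.univ := by
      ext p
      simp only [Finset.mem_filter, Finset.mem_univ, true_and, Finset.mem_product,
        Finset.mem_singleton, and_true]
    rw [h3, Finset.card_product]
    simp
  -- in-degree is 2
  have hin : ∀ v : Fin n, (Finset.univ.filter (fun k => c (hp k) = v)).card = 2 := by
    intro v
    have h1 : (Finset.univ.filter (fun k => c (tp k) = v)).card +
        (Finset.univ.filter (fun k => c (hp k) = v)).card = 4 := by
      rw [Finset.card_filter, Finset.card_filter, ← Finset.sum_add_distrib]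
      rw [Finset.sum_congr rfl (fun k _ => hindk k v)]
      exact hc4 v
    have := hout v
    omega
  ------------------------------------------------------------------
  -- Step 2: Hall again to pick one out-pair per color with distinct heads
  ------------------------------------------------------------------
  set t2 : Fin n → Finset (Fin n) :=
    fun v => (Finset.univ.filter (fun k => c (tp k) = v)).image (fun k => c (hp k)) with ht2
  have hall2 : ∀ s : Finset (Fin n), s.card ≤ (s.biUnion t2).card := by
    intro s
    set Nb := s.biUnion t2 with hNb
    have hsub : Finset.univ.filter (fun k => c (tp k) ∈ s) ⊆
        Finset.univ.filter (fun k => c (hp k) ∈ Nb) := by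
      intro k hk
      simp only [Finset.mem_filter, Finset.mem_univ, true_and] at hk ⊢
      rw [hNb, Finset.mem_biUnion]
      refine ⟨c (tp k), hk, ?_⟩
      rw [ht2]
      exact Finset.mem_image_of_mem _ (by simp)
    have hcount : ∀ (s' : Finset (Fin n)) (F : Fin (2*n) → Fin n),
        (∀ v : Fin n, (Finset.univ.filter (fun k => F k = v)).card = 2) →
        (Finset.univ.filter (fun k => F k ∈ s')).card = 2 * s'.card := by
      intro s' F hF
      have : Finset.univ.filter (fun k => F k ∈ s') =
          s'.biUnion (fun v => Finset.univ.filter (fun k => F k = v)) := by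
        ext k
        simp only [Finset.mem_filter, Finset.mem_univ, true_and, Finset.mem_biUnion]
        constructor
        · intro h; exact ⟨F k, h, rfl⟩
        · rintro ⟨v, hv, rfl⟩; exact hv
      rw [this, Finset.card_biUnion]
      · rw [Finset.sum_congr rfl (fun v _ => hF v)]
        simp [mul_comm]
      · intro x _ y _ hxy
        simp only [Finset.disjoint_left, Finset.mem_filter]
        rintro k ⟨_, rfl⟩ ⟨_, h⟩
        exact hxy h
    have h1 := hcount s (fun k => c (tp k)) hout
    have h2 := hcount Nb (fun k => c (hp k)) hin
    have := Finset.card_le_card hsub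
    rw [h1, h2] at this
    omega
  obtain ⟨f, hfinj, hfmem⟩ :=
    (Finset.all_card_le_biUnion_card_iff_exists_injective t2).mp hall2
  have hfbij : Function.Bijective f := by
    rw [Fintype.bijective_iff_injective_and_card]
    exact ⟨hfinj, rfl⟩
  have he : ∀ v : Fin n, ∃ k : Fin (2*n), c (tp k) = v ∧ c (hp k) = f v := by
    intro v
    have := hfmem v
    rw [ht2, Finset.mem_image] at this
    obtain ⟨k, hk1, hk2⟩ := this
    exact ⟨k, (Finset.mem_filter.mp hk1).2, hk2⟩
  choose e he1 he2 using he
  have heinj : Function.Injective e := by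
    intro u v h
    rw [← he1 u, ← he1 v, h]
  ------------------------------------------------------------------
  -- Assemble the answer set
  ------------------------------------------------------------------
  refine ⟨Finset.univ.biUnion (fun v : Fin n => ({a (e v), b (e v)} : Finset (Fin (4*n)))),
    ?_, ?_, ?_⟩
  · rw [Finset.card_biUnion (fun x _ y _ hxy => hdisj (e x) (e y) (fun h => hxy (heinj h)))]
    rw [Finset.sum_congr rfl (fun v _ => Finset.card_pair (hane (e v)))]
    simp [mul_comm]
  · rw [Finset.sum_biUnion (fun x _ y _ hxy => hdisj (e x) (e y) (fun h => hxy (heinj h)))]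
    have hpair : ∀ k : Fin (2*n), (∑ i ∈ ({a k, b k} : Finset (Fin (4*n))), ((i : ℕ) + 1))
        = 4*n + 1 := by
      intro k
      rw [Finset.sum_pair (hane k)]
      have := k.2
      simp only [haval, hbval]
      omega
    rw [Finset.sum_congr rfl (fun v _ => hpair (e v))]
    simp [mul_comm]
  · intro j
    rw [Finset.filter_biUnion]
    rw [Finset.card_biUnion]
    · have hone : ∀ v : Fin n,
          (Finset.filter (fun i => c i = j) ({a (e v), b (e v)} : Finset (Fin (4*n)))).card
          = (if v = j then 1 else 0) + (if f v = j then 1 else 0) := by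
        intro v
        rw [Finset.card_filter, Finset.sum_pair (hane (e v))]
        have := hindk (e v) j
        rw [he1 v, he2 v] at this
        exact this.symm ▸ rfl
      rw [Finset.sum_congr rfl (fun v _ => hone v)]
      rw [Finset.sum_add_distrib]
      have hA : ∑ v : Fin n, (if v = j then 1 else 0) = 1 := by simp
      have hB : ∑ v : Fin n, (if f v = j then (1:ℕ) else 0) = 1 := by
        rw [← Finset.card_filter]
        have : Finset.univ.filter (fun v => f v = j) =
            {(Equiv.ofBijective f hfbij).symm j} := by
          ext v
          simp only [Finset.mem_filter, Finset.mem_univ, true_and, Finset.mem_singleton]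
          constructor
          · intro h
            rw [Equiv.eq_symm_apply]
            exact h
          · rintro rfl
            exact (Equiv.ofBijective f hfbij).apply_symm_apply j
        rw [this]
        simp
      rw [hA, hB]
    · intro x _ y _ hxy
      exact Finset.disjoint_filter_filter
        (hdisj (e x) (e y) (fun h => hxy (heinj h)))
end

section
/- Let n > 1 and consider n² stations labeled 0, 1, ..., n²−1 by altitude. For k = n² − n, there exist two families A and B, each consisting of k cable cars (pairs (i,j) with i < j) such that within each family all starting points are distinct, all finishing points are distinct, and the cars are monotone (higher start implies higher finish), for which no two stations are linked by both families, where a family links station x to station y (x < y) if y is reachable from x via a chain of its cars. -/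
/-- A family of cable cars is valid for `N` stations if each car goes from a lower
station to a higher one, starting points are distinct, finishing points are distinct,
and a car that starts higher finishes higher. -/
def ValidFamily (N : ℕ) (F : Finset (ℕ × ℕ)) : Prop :=
  (∀ p ∈ F, p.1 < p.2 ∧ p.2 < N) ∧
  (∀ p ∈ F, ∀ q ∈ F, p.1 = q.1 → p = q) ∧
  (∀ p ∈ F, ∀ q ∈ F, p.2 = q.2 → p = q) ∧
  (∀ p ∈ F, ∀ q ∈ F, p.1 < q.1 → p.2 < q.2)

/-- Station `y` is linked from station `x` by the family `F` if it is reachable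
via a chain of one or more cars of `F`. -/
def Linked (F : Finset (ℕ × ℕ)) (x y : ℕ) : Prop :=
  Relation.TransGen (fun a b => (a, b) ∈ F) x y

theorem stmt_7 (n : ℕ) (hn : 1 < n) :
    ∃ A B : Finset (ℕ × ℕ),
      A.card = n^2 - n ∧ B.card = n^2 - n ∧
      ValidFamily (n^2) A ∧ ValidFamily (n^2) B ∧
      ∀ x y : ℕ, ¬(Linked A x y ∧ Linked B x y) := by
  have hn0 : 0 < n := by omega
  have hNN : n ^ 2 = n * n := sq n
  have hnN : n ≤ n ^ 2 := by
    rw [hNN]; exact Nat.le_mul_of_pos_left n hn0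
  have hmulpred : n * (n - 1) = n ^ 2 - n := by
    rw [hNN, ← Nat.mul_pred]; rfl
  set A : Finset (ℕ × ℕ) :=
    (Finset.range (n ^ 2 - n)).image (fun x => (x, x + n)) with hAdef
  set B : Finset (ℕ × ℕ) :=
    ((Finset.range n) ×ˢ (Finset.range (n - 1))).image
      (fun p : ℕ × ℕ => (n * p.1 + p.2, n * p.1 + p.2 + 1)) with hBdef
  have memA : ∀ p : ℕ × ℕ, p ∈ A ↔ p.2 = p.1 + n ∧ p.1 < n ^ 2 - n := by
    rintro ⟨a, b⟩
    simp only [hAdef, Finset.mem_image, Finset.mem_range, Prod.mk.injEq]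
    constructor
    · rintro ⟨x, hx, rfl, rfl⟩; exact ⟨rfl, hx⟩
    · rintro ⟨rfl, ha⟩; exact ⟨a, ha, rfl, rfl⟩
  have memB : ∀ p : ℕ × ℕ, p ∈ B ↔
      ∃ q r, q < n ∧ r < n - 1 ∧ p.1 = n * q + r ∧ p.2 = p.1 + 1 := by
    rintro ⟨a, b⟩
    simp only [hBdef, Finset.mem_image, Finset.mem_product, Finset.mem_range, Prod.mk.injEq,
      Prod.exists]
    constructor
    · rintro ⟨q, r, ⟨hq, hr⟩, rfl, rfl⟩; exact ⟨q, r, hq, hr, rfl, rfl⟩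
    · rintro ⟨q, r, hq, hr, rfl, rfl⟩; exact ⟨q, r, ⟨hq, hr⟩, rfl, rfl⟩
  -- key div facts for B
  have divfact : ∀ q r, q < n → r < n → (n * q + r) / n = q := by
    intro q r hq hr
    rw [Nat.mul_add_div hn0, Nat.div_eq_of_lt hr, add_zero]
  have linkA : ∀ x y, Linked A x y → x < y ∧ x % n = y % n := by
    intro x y h
    induction h with
    | single h =>
        obtain ⟨h1, h2⟩ := (memA _).mp h
        simp only at h1
        subst h1
        exact ⟨by omega, (Nat.add_mod_right x n).symm⟩
    | tail h1 h2 ih =>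
        obtain ⟨h1', h2'⟩ := (memA _).mp h2
        simp only at h1'
        subst h1'
        exact ⟨by omega, by rw [ih.2, Nat.add_mod_right]⟩
  have linkB : ∀ x y, Linked B x y → x < y ∧ x / n = y / n := by
    intro x y h
    induction h with
    | single h =>
        obtain ⟨q, r, hq, hr, e1, e2⟩ := (memB _).mp h
        simp only at e1 e2
        subst e1; subst e2
        refine ⟨by omega, ?_⟩
        rw [divfact q r hq (by omega), show n * q + r + 1 = n * q + (r + 1) by ring,
          divfact q (r + 1) hq (by omega)]
    | tail h1 h2 ih =>
        obtain ⟨q, r, hq, hr, e1, e2⟩ := (memB _).mp h2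
        simp only at e1 e2
        refine ⟨by omega, ?_⟩
        rw [ih.2, e1] at *
        rw [e2, e1, divfact q r hq (by omega),
          show n * q + r + 1 = n * q + (r + 1) by ring,
          divfact q (r + 1) hq (by omega)]
  refine ⟨A, B, ?_, ?_, ?_, ?_, ?_⟩
  · rw [hAdef, Finset.card_image_of_injective, Finset.card_range]
    intro a b h
    simpa using congrArg Prod.fst h
  · rw [hBdef, Finset.card_image_of_injOn, Finset.card_product, Finset.card_range,
      Finset.card_range, hmulpred]
    intro p hp q hq h
    simp only [Finset.coe_product, Set.mem_prod, Finset.mem_coe, Finset.mem_range] at hp hq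
    have h1 : n * p.1 + p.2 = n * q.1 + q.2 := by
      simpa using congrArg Prod.fst h
    have hp2 : (n * p.1 + p.2) / n = p.1 := divfact _ _ hp.1 (by omega)
    have hq2 : (n * q.1 + q.2) / n = q.1 := divfact _ _ hq.1 (by omega)
    have e1 : p.1 = q.1 := by rw [← hp2, ← hq2, h1]
    have e2 : p.2 = q.2 := by rw [e1] at h1; omega
    exact Prod.ext e1 e2
  · refine ⟨?_, ?_, ?_, ?_⟩
    · intro p hp
      obtain ⟨h1, h2⟩ := (memA p).mp hp
      exact ⟨by omega, by omega⟩
    · intro p hp q hq h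
      obtain ⟨h1, h2⟩ := (memA p).mp hp
      obtain ⟨h1', h2'⟩ := (memA q).mp hq
      exact Prod.ext h (by omega)
    · intro p hp q hq h
      obtain ⟨h1, h2⟩ := (memA p).mp hp
      obtain ⟨h1', h2'⟩ := (memA q).mp hq
      exact Prod.ext (by omega) h
    · intro p hp q hq h
      obtain ⟨h1, h2⟩ := (memA p).mp hp
      obtain ⟨h1', h2'⟩ := (memA q).mp hq
      omega
  · refine ⟨?_, ?_, ?_, ?_⟩
    · intro p hp
      obtain ⟨q, r, hq, hr, e1, e2⟩ := (memB p).mp hp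
      refine ⟨by omega, ?_⟩
      have hle : n * q ≤ n * (n - 1) := Nat.mul_le_mul_left n (by omega)
      omega
    · intro p hp q hq h
      obtain ⟨a, b, ha, hb, e1, e2⟩ := (memB p).mp hp
      obtain ⟨a', b', ha', hb', e1', e2'⟩ := (memB q).mp hq
      exact Prod.ext h (by omega)
    · intro p hp q hq h
      obtain ⟨a, b, ha, hb, e1, e2⟩ := (memB p).mp hp
      obtain ⟨a', b', ha', hb', e1', e2'⟩ := (memB q).mp hq
      exact Prod.ext (by omega) h
    · intro p hp q hq h
      obtain ⟨a, b, ha, hb, e1, e2⟩ := (memB p).mp hp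
      obtain ⟨a', b', ha', hb', e1', e2'⟩ := (memB q).mp hq
      omega
  · rintro x y ⟨hA, hB⟩
    obtain ⟨hlt, hmod⟩ := linkA x y hA
    obtain ⟨-, hdiv⟩ := linkB x y hB
    have e1 := Nat.div_add_mod x n
    have e2 := Nat.div_add_mod y n
    rw [hdiv, hmod] at e1
    omega
end

section
/- Let n > 1 and k = n² − n + 1. For any two families A and B of k cable cars each on n² stations (cars are pairs (i,j), i < j, with distinct starts, distinct ends, and monotone within each family), there exist two stations linked by both A and B. -/
/-!
Following the cars of a family backwards from a station, which must stop since every car goes up,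
leads to a *source*: a station where no car arrives. Distinct cars have distinct ends, so there are
exactly `n² - k = n - 1` sources; distinct cars have distinct starts, so two stations reached from
the same source are linked. By pigeonhole, two of the `n²` stations share their source in both
families.
-/

open Finset Relation

def sources (N : ℕ) (F : Finset (ℕ × ℕ)) : Finset ℕ :=
  range N \ F.image Prod.snd

section

variable {F : Finset (ℕ × ℕ)}

lemma card_sources {N : ℕ} (hlt : ∀ p ∈ F, p.2 < N)
    (hend : Set.InjOn Prod.snd (F : Set (ℕ × ℕ))) :
    #(sources N F) = N - #F := by
  have hsub : F.image Prod.snd ⊆ range N := by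
    intro _ h
    obtain ⟨p, hp, rfl⟩ := mem_image.mp h
    exact mem_range.mpr (hlt p hp)
  rw [sources, card_sdiff_of_subset hsub, card_range, card_image_of_injOn hend]

lemma exists_source_reflTransGen (hF : ∀ p ∈ F, p.1 < p.2) (x : ℕ) :
    ∃ r ≤ x, r ∉ F.image Prod.snd ∧ ReflTransGen (fun a b => (a, b) ∈ F) r x := by
  induction x using Nat.strong_induction_on with
  | _ x ih =>
    by_cases hx : x ∈ F.image Prod.snd
    · obtain ⟨⟨a, x⟩, hax, rfl⟩ := mem_image.mp hx
      obtain ⟨r, hra, hr, hpath⟩ := ih a (hF _ hax)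
      exact ⟨r, hra.trans (hF _ hax).le, hr, hpath.tail hax⟩
    · exact ⟨x, le_rfl, hx, .refl⟩

lemma le_of_reflTransGen (hF : ∀ p ∈ F, p.1 < p.2) {a b : ℕ}
    (h : ReflTransGen (fun a b => (a, b) ∈ F) a b) : a ≤ b := by
  induction h with
  | refl => exact le_rfl
  | tail _ hbc ih => exact ih.trans (hF _ hbc).le

lemma linked_of_reflTransGen_of_lt (hF : ∀ p ∈ F, p.1 < p.2)
    (hstart : ∀ p ∈ F, ∀ q ∈ F, p.1 = q.1 → p = q) {r x y : ℕ}
    (hx : ReflTransGen (fun a b => (a, b) ∈ F) r x)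
    (hy : ReflTransGen (fun a b => (a, b) ∈ F) r y) (hxy : x < y) : Linked F x y := by
  have hunique : Relator.RightUnique (fun a b => (a, b) ∈ F) :=
    fun _ _ _ hb hc => congrArg Prod.snd (hstart _ hb _ hc rfl)
  rcases hx.total_of_right_unique hunique hy with h | h
  · rcases reflTransGen_iff_eq_or_transGen.mp h with rfl | h
    · exact absurd hxy (lt_irrefl _)
    · exact h
  · exact absurd (le_of_reflTransGen hF h) hxy.not_ge

end

theorem stmt_8 (n : ℕ) (hn : 1 < n) (A B : Finset (ℕ × ℕ))
    (hA : ValidFamily (n^2) A) (hB : ValidFamily (n^2) B)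
    (hAcard : A.card = n^2 - n + 1) (hBcard : B.card = n^2 - n + 1) :
    ∃ x y : ℕ, x < y ∧ Linked A x y ∧ Linked B x y := by
  obtain ⟨hAcar, hAstart, hAend, -⟩ := hA
  obtain ⟨hBcar, hBstart, hBend, -⟩ := hB
  have hAinc : ∀ p ∈ A, p.1 < p.2 := fun p hp => (hAcar p hp).1
  have hBinc : ∀ p ∈ B, p.1 < p.2 := fun p hp => (hBcar p hp).1
  choose rA hrA_le hrA using exists_source_reflTransGen hAinc
  choose rB hrB_le hrB using exists_source_reflTransGen hBinc
  have hmaps : ∀ x ∈ range (n^2), (rA x, rB x) ∈ sources (n^2) A ×ˢ sources (n^2) B := by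
    intro x hx
    have hx : x < n^2 := mem_range.mp hx
    simp only [mem_product, sources, mem_sdiff, mem_range]
    exact ⟨⟨(hrA_le x).trans_lt hx, (hrA x).1⟩, ⟨(hrB_le x).trans_lt hx, (hrB x).1⟩⟩
  have hcard : #(sources (n^2) A ×ˢ sources (n^2) B) < #(range (n^2)) := by
    have hsq : n ≤ n^2 := Nat.le_self_pow two_ne_zero n
    rw [card_product, card_sources (fun p hp => (hAcar p hp).2) hAend,
      card_sources (fun p hp => (hBcar p hp).2) hBend, hAcard, hBcard, card_range,
      show n^2 - (n^2 - n + 1) = n - 1 by omega, sq]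
    exact Nat.mul_self_lt_mul_self (by omega)
  obtain ⟨x, -, y, -, hne, heq⟩ := exists_ne_map_eq_of_card_lt_of_maps_to hcard hmaps
  obtain ⟨hAxy, hBxy⟩ := Prod.mk.inj heq
  rcases hne.lt_or_gt with h | h
  · exact ⟨x, y, h, linked_of_reflTransGen_of_lt hAinc hAstart (hrA x).2 (hAxy ▸ (hrA y).2) h,
      linked_of_reflTransGen_of_lt hBinc hBstart (hrB x).2 (hBxy ▸ (hrB y).2) h⟩
  · exact ⟨y, x, h, linked_of_reflTransGen_of_lt hAinc hAstart (hAxy ▸ (hrA y).2) (hrA x).2 h,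
      linked_of_reflTransGen_of_lt hBinc hBstart (hBxy ▸ (hrB y).2) (hrB x).2 h⟩
end

section
/- Let G be a simple graph on stations 0, 1, ..., N−1 whose edges come from a monotone matching of cable cars: distinct starting points, distinct finishing points, and a car starting higher finishes higher. Then any path in G between vertices i < j passes through strictly increasing vertex labels; in particular, G is acyclic. -/
/-!
Every vertex has at most one neighbour above it (the finish of the car starting there) and at
most one below it (the start of the car finishing there). Hence a path that moves up once keeps
moving up: stepping down from `w` could only lead back to the vertex it came from. Along a path
from `i` to `j > i` the first step cannot go down (it would then keep going down), so the path is
increasing. A cycle `v → w → ⋯ → v` with, say, `v < w` would contain a second path from `v` to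
`w`, whose first step goes up from `v` and hence uses the edge `vw` again.
-/

namespace SimpleGraph

variable {α : Type*} {G : SimpleGraph α}

namespace Walk

theorem IsPath.isChain_support_cons {r : α → α → Prop}
    (hr : ∀ x y, G.Adj x y → r x y ∨ r y x)
    (huniq : ∀ x, {y | G.Adj x y ∧ r y x}.Subsingleton)
    {u w v : α} (h : G.Adj u w) (q : G.Walk w v) (hp : (cons h q).IsPath) (huw : r u w) :
    (cons h q).support.IsChain r := by
  induction q generalizing u with
  | nil => simpa using huw
  | @cons w w' v h' q ih =>
    rw [support_cons]
    refine List.IsChain.cons_cons huw ?_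
    rcases hr w w' h' with hww' | hw'w
    · exact ih h' (cons_isPath_iff _ _ |>.mp hp).1 hww'
    · have : w' = u := huniq w ⟨h', hw'w⟩ ⟨h.symm, huw⟩
      subst this
      simp [cons_isPath_iff] at hp

section LinearOrder

variable [LinearOrder α]

theorem IsPath.isChain_lt_support
    (hup : ∀ x, {y | G.Adj x y ∧ x < y}.Subsingleton)
    (hdown : ∀ x, {y | G.Adj x y ∧ y < x}.Subsingleton)
    {i j : α} (hij : i < j) {p : G.Walk i j} (hp : p.IsPath) :
    p.support.IsChain (· < ·) := by
  cases p with
  | nil => exact absurd hij (lt_irrefl i)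
  | @cons _ v _ h q =>
    rcases (G.ne_of_adj h).lt_or_gt with hiv | hvi
    · exact hp.isChain_support_cons (fun x y hxy => (G.ne_of_adj hxy).lt_or_gt) hdown h q hiv
    · have hdec := hp.isChain_support_cons (r := (· > ·))
        (fun x y hxy => (G.ne_of_adj hxy).lt_or_gt.symm) hup h q hvi
      have hji : j < i :=
        List.rel_of_pairwise_cons (List.isChain_iff_pairwise.mp hdec) q.end_mem_support
      exact absurd hij hji.asymm

theorem IsPath.mk_mem_edges_of_lt
    (hup : ∀ x, {y | G.Adj x y ∧ x < y}.Subsingleton)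
    (hdown : ∀ x, {y | G.Adj x y ∧ y < x}.Subsingleton)
    {a b c : α} (hab : a < b) {p : G.Walk a b} (hp : p.IsPath) (hac : G.Adj a c) (hac' : a < c) :
    s(a, c) ∈ p.edges := by
  cases p with
  | nil => exact absurd hab (lt_irrefl a)
  | @cons _ u _ h q =>
    have hchain := hp.isChain_lt_support hup hdown hab
    rw [support_cons, ← q.cons_tail_support] at hchain
    have hau : a < u := (List.isChain_cons_cons.mp hchain).1
    simp [hup a ⟨h, hau⟩ ⟨hac, hac'⟩]

end LinearOrder

end Walk

open Walk in
theorem isAcyclic_of_subsingleton_adj_gt_of_subsingleton_adj_lt [LinearOrder α]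
    (hup : ∀ x, {y | G.Adj x y ∧ x < y}.Subsingleton)
    (hdown : ∀ x, {y | G.Adj x y ∧ y < x}.Subsingleton) :
    G.IsAcyclic := by
  intro v c hc
  cases c with
  | nil => exact not_isCycle_nil hc
  | @cons _ w _ h q =>
    obtain ⟨hq, hvw⟩ := (cons_isCycle_iff q h).mp hc
    rcases (G.ne_of_adj h).lt_or_gt with hlt | hgt
    · exact hvw (by simpa [Sym2.eq_swap] using hq.reverse.mk_mem_edges_of_lt hup hdown hlt h hlt)
    · exact hvw (by simpa [Sym2.eq_swap] using hq.mk_mem_edges_of_lt hup hdown hgt h.symm hgt)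

end SimpleGraph

theorem stmt_9_general (N : ℕ) (cars : Finset (Fin N × Fin N))
    (hlt : ∀ p ∈ cars, p.1 < p.2)
    (hstart : ∀ p ∈ cars, ∀ q ∈ cars, p.1 = q.1 → p = q)
    (hend : ∀ p ∈ cars, ∀ q ∈ cars, p.2 = q.2 → p = q)
    (G : SimpleGraph (Fin N))
    (hG : ∀ x y : Fin N, G.Adj x y ↔ ((x, y) ∈ cars ∨ (y, x) ∈ cars)) :
    (∀ i j : Fin N, i < j → ∀ p : G.Walk i j, p.IsPath →
        p.support.Chain' (· < ·)) ∧
    G.IsAcyclic := by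
  have hcar : ∀ x y, G.Adj x y → x < y → (x, y) ∈ cars := fun x y hxy hxy' =>
    ((hG x y).mp hxy).resolve_right fun hyx => (hlt _ hyx).asymm hxy'
  have hup : ∀ x, {y | G.Adj x y ∧ x < y}.Subsingleton := fun x y ⟨hxy, hxy'⟩ z ⟨hxz, hxz'⟩ =>
    congrArg Prod.snd (hstart _ (hcar x y hxy hxy') _ (hcar x z hxz hxz') rfl)
  have hdown : ∀ x, {y | G.Adj x y ∧ y < x}.Subsingleton := fun x y ⟨hxy, hyx⟩ z ⟨hxz, hzx⟩ =>
    congrArg Prod.fst (hend _ (hcar y x hxy.symm hyx) _ (hcar z x hxz.symm hzx) rfl)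
  exact ⟨fun i j hij p hp => hp.isChain_lt_support hup hdown hij,
    SimpleGraph.isAcyclic_of_subsingleton_adj_gt_of_subsingleton_adj_lt hup hdown⟩

theorem stmt_9 (N : ℕ) (cars : Finset (Fin N × Fin N))
    (hlt : ∀ p ∈ cars, p.1 < p.2)
    (hstart : ∀ p ∈ cars, ∀ q ∈ cars, p.1 = q.1 → p = q)
    (hend : ∀ p ∈ cars, ∀ q ∈ cars, p.2 = q.2 → p = q)
    (hmono : ∀ p ∈ cars, ∀ q ∈ cars, p.1 < q.1 → p.2 < q.2)
    (G : SimpleGraph (Fin N))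
    (hG : ∀ x y : Fin N, G.Adj x y ↔ ((x, y) ∈ cars ∨ (y, x) ∈ cars)) :
    (∀ i j : Fin N, i < j → ∀ p : G.Walk i j, p.IsPath →
        p.support.Chain' (· < ·)) ∧
    G.IsAcyclic :=
  stmt_9_general N cars hlt hstart hend G hG
end

section
/- Let n > 1 and let a₁, ..., aₙ be positive integers such that for every pair of indices i ≠ j, there exists a nonempty multiset of the cards whose geometric mean equals (aᵢ + aⱼ)/2, i.e., there exist m ≥ 1 and indices i₁, ..., iₘ with ((aᵢ + aⱼ)/2)^m = a_{i₁} · a_{i₂} ⋯ a_{iₘ}. Then a₁ = a₂ = ⋯ = aₙ. -/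
/-!
The condition is homogeneous, so after dividing by the gcd we may assume the cards are coprime, and
then show that every card is `1`. Otherwise let `p` be a prime dividing the largest card `a M`, and
let `a b` be the largest card not divisible by `p` (coprimality makes it exist). As `p ∤ a M + a b`,
no card in a product equal to `((a M + a b) / 2) ^ m` is divisible by `p`, so all of them are at
most `a b`. Some card of the product is at least the mean `(a M + a b) / 2`, which forces
`a M = a b`, contradicting `p ∣ a M`.
-/

open Finset

variable {ι : Type*}

def MidpointIsGeomMean (a : ι → ℕ) (i j : ι) : Prop :=
  ∃ m, 1 ≤ m ∧ ∃ f : Fin m → ι, (a i + a j) ^ m = 2 ^ m * ∏ r, a (f r)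

theorem midpointIsGeomMean_iff {a : ι → ℕ} {i j : ι} :
    MidpointIsGeomMean a i j ↔
      ∃ m, 1 ≤ m ∧ ∃ f : Fin m → ι, ((a i + a j : ℝ) / 2) ^ m = ∏ r, (a (f r) : ℝ) := by
  refine exists_congr fun m => and_congr_right fun _ => exists_congr fun f => ?_
  rw [div_pow, div_eq_iff (by positivity), mul_comm]
  norm_cast

theorem exists_le_two_mul_of_pow_eq {m x : ℕ} (hm : 1 ≤ m) (y : Fin m → ℕ)
    (h : x ^ m = 2 ^ m * ∏ r, y r) : ∃ r, x ≤ 2 * y r := by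
  by_contra! hlt
  have hx : 1 ≤ x := by have := hlt ⟨0, hm⟩; omega
  have hprod : ∏ r, 2 * y r ≤ ∏ _r : Fin m, (x - 1) :=
    prod_le_prod (fun _ _ => Nat.zero_le _) fun r _ => by have := hlt r; omega
  rw [prod_mul_distrib, prod_const, prod_const, card_univ, Fintype.card_fin, ← h] at hprod
  exact absurd hprod (Nat.pow_lt_pow_left (by omega) (by omega)).not_ge

theorem MidpointIsGeomMean.exists_le_two_mul {a : ι → ℕ} {i j : ι}
    (h : MidpointIsGeomMean a i j) : ∃ k m, a i + a j ≤ 2 * a k ∧ a k ∣ (a i + a j) ^ m := by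
  obtain ⟨m, hm, f, hf⟩ := h
  obtain ⟨r, hr⟩ := exists_le_two_mul_of_pow_eq hm (a ∘ f) hf
  exact ⟨f r, m, hr, hf ▸ dvd_mul_of_dvd_right (dvd_prod_of_mem (a ∘ f) (mem_univ r)) _⟩

theorem MidpointIsGeomMean.of_const_mul {a : ι → ℕ} {d : ℕ} {i j : ι} (hd : 0 < d)
    (h : MidpointIsGeomMean (fun k => d * a k) i j) : MidpointIsGeomMean a i j := by
  obtain ⟨m, hm, f, hf : (d * a i + d * a j) ^ m = 2 ^ m * ∏ r, d * a (f r)⟩ := h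
  refine ⟨m, hm, f, Nat.eq_of_mul_eq_mul_left (pow_pos hd m) ?_⟩
  calc d ^ m * (a i + a j) ^ m = (d * a i + d * a j) ^ m := by rw [← mul_pow, mul_add]
    _ = 2 ^ m * ∏ r, d * a (f r) := hf
    _ = d ^ m * (2 ^ m * ∏ r, a (f r)) := by
      rw [prod_mul_distrib, prod_const, card_univ, Fintype.card_fin]
      ring

theorem eq_one_of_gcd_eq_one [Fintype ι] {a : ι → ℕ} (hpos : ∀ i, 0 < a i)
    (hgcd : univ.gcd a = 1) (h : ∀ i j, i ≠ j → MidpointIsGeomMean a i j) (i : ι) :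
    a i = 1 := by
  by_contra hi
  obtain ⟨M, -, hM⟩ := exists_max_image univ a ⟨i, mem_univ i⟩
  obtain ⟨p, hp, hpM⟩ := Nat.exists_prime_and_dvd
    (show a M ≠ 1 by have := hM i (mem_univ i); have := hpos i; omega)
  have hcoprime : (univ.filter fun k => ¬ p ∣ a k).Nonempty := by
    refine filter_nonempty_iff.mpr ?_
    by_contra! hall
    exact hp.not_dvd_one (hgcd ▸ dvd_gcd hall)
  obtain ⟨b, hb, hbmax⟩ := exists_max_image _ a hcoprime
  simp only [mem_filter, mem_univ, true_and] at hb
  have hsum : ¬ p ∣ a M + a b := fun hd => hb ((Nat.dvd_add_right hpM).mp hd)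
  obtain ⟨k, m, hle, hdvd⟩ := (h M b fun e => hb (e ▸ hpM)).exists_le_two_mul
  have hk : ¬ p ∣ a k := fun hpk => hsum (hp.dvd_of_dvd_pow (hpk.trans hdvd))
  have hkb := hbmax k (by simpa using hk)
  have hbM := hM b (mem_univ b)
  have hMb : a M = a b := by omega
  exact hb (hMb ▸ hpM)

theorem stmt_11_general (n : ℕ) (a : Fin n → ℕ) (hpos : ∀ i, 0 < a i)
    (h : ∀ i j : Fin n, i ≠ j →
      ∃ (m : ℕ), 1 ≤ m ∧ ∃ f : Fin m → Fin n,
        ((a i + a j : ℝ) / 2) ^ m = ∏ r : Fin m, (a (f r) : ℝ)) :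
    ∀ i j : Fin n, a i = a j := by
  intro i j
  obtain ⟨b, hab, hb⟩ := extract_gcd a ⟨i, mem_univ i⟩
  set d := univ.gcd a
  have hd : 0 < d := Nat.pos_of_ne_zero fun h0 =>
    (hpos i).ne' (gcd_eq_zero_iff.mp h0 i (mem_univ i))
  have ha : a = fun k => d * b k := funext fun k => hab k (mem_univ k)
  have hb_pos : ∀ k, 0 < b k := fun k => Nat.pos_of_mul_pos_left (ha ▸ hpos k)
  have hb_mean : ∀ k l, k ≠ l → MidpointIsGeomMean b k l := fun k l hkl =>
    (ha ▸ midpointIsGeomMean_iff.mpr (h k l hkl)).of_const_mul hd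
  have hb_one := eq_one_of_gcd_eq_one hb_pos hb hb_mean
  rw [hab i (mem_univ i), hab j (mem_univ j), hb_one i, hb_one j]

theorem stmt_11 (n : ℕ) (hn : 1 < n) (a : Fin n → ℕ) (hpos : ∀ i, 0 < a i)
    (h : ∀ i j : Fin n, i ≠ j →
      ∃ (m : ℕ), 1 ≤ m ∧ ∃ f : Fin m → Fin n,
        ((a i + a j : ℝ) / 2) ^ m = ∏ r : Fin m, (a (f r) : ℝ)) :
    ∀ i j : Fin n, a i = a j :=
  stmt_11_general n a hpos h
end

section
/- Let a₁ ≥ a₂ ≥ ⋯ ≥ aₙ be positive integers with gcd(a₁, ..., aₙ) = 1 and a₁ ≥ 2, and let p be a prime dividing a₁. Let k be the smallest index with p ∤ aₖ. If m ≥ 1 and indices i₁, ..., iₘ satisfy ((a₁ + aₖ)/2)^m = a_{i₁} ⋯ a_{iₘ} (with a₁ + aₖ even), then p divides none of a_{i₁}, ..., a_{iₘ} and hence each a_{iᵣ} ≤ aₖ, giving the contradiction ((a₁ + aₖ)/2)^m ≤ aₖ^m < ((a₁ + aₖ)/2)^m. -/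
/-!
Since `p ∣ a₁` and `p ∤ aₖ`, the prime `p` does not divide `(a₁ + aₖ) / 2`, hence divides no factor
of a product equal to a power of it. By minimality of `k`, every term not divisible by `p` sits at an
index `≥ k`, so it is at most `aₖ`. But `aₖ < a₁` (they differ modulo `p`), so `aₖ < (a₁ + aₖ) / 2`
and the product is strictly smaller than `((a₁ + aₖ) / 2) ^ m`.
-/

theorem Prime.not_dvd_of_pow_eq_prod {M ι : Type*} [CommMonoidWithZero M] {p c : M}
    (hp : Prime p) (hc : ¬ p ∣ c) {m : ℕ} {s : Finset ι} {b : ι → M}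
    (h : c ^ m = ∏ i ∈ s, b i) {i : ι} (hi : i ∈ s) : ¬ p ∣ b i := fun hdvd =>
  hc <| hp.dvd_of_dvd_pow (h ▸ hdvd.trans (Finset.dvd_prod_of_mem b hi))

theorem Nat.not_dvd_half_add {p a b : ℕ} (ha : p ∣ a) (hb : ¬ p ∣ b) (heven : 2 ∣ a + b) :
    ¬ p ∣ (a + b) / 2 := fun h =>
  hb <| (Nat.dvd_add_right ha).mp <| (Nat.mul_div_cancel' heven) ▸ h.mul_left 2

theorem Antitone.apply_le_of_forall_lt_of_not {ι α : Type*} [LinearOrder ι] [Preorder α]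
    {a : ι → α} (ha : Antitone a) {P : ι → Prop} {k j : ι} (hk : ∀ i, i < k → P i)
    (hj : ¬ P j) : a j ≤ a k :=
  ha <| le_of_not_gt fun hjk => hj (hk j hjk)

theorem Finset.prod_lt_pow_card_of_le_of_lt {ι : Type*} {s : Finset ι} (hs : s.Nonempty)
    {b : ι → ℕ} {B c : ℕ} (hb : ∀ i ∈ s, b i ≤ B) (hB : B < c) : ∏ i ∈ s, b i < c ^ s.card :=
  calc ∏ i ∈ s, b i ≤ B ^ s.card := Finset.prod_le_pow_card s b B hb
    _ < c ^ s.card := Nat.pow_lt_pow_left hB hs.card_pos.ne'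

theorem stmt_12_general (n : ℕ) (hn : 0 < n) (a : Fin n → ℕ)
    (hanti : ∀ i j : Fin n, i ≤ j → a j ≤ a i)
    (p : ℕ) (hp : p.Prime) (hpa1 : p ∣ a ⟨0, hn⟩)
    (k : Fin n) (hk : ¬ p ∣ a k) (hkmin : ∀ i : Fin n, i < k → p ∣ a i)
    (m : ℕ) (hm : 1 ≤ m) (f : Fin m → Fin n)
    (heven : 2 ∣ a ⟨0, hn⟩ + a k)
    (hgm : ((a ⟨0, hn⟩ + a k) / 2) ^ m = ∏ r : Fin m, a (f r)) :
    (∀ r : Fin m, ¬ p ∣ a (f r)) ∧ (∀ r : Fin m, a (f r) ≤ a k) ∧ False := by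
  have ha : Antitone a := fun i j hij => hanti i j hij
  have hcop : ∀ r, ¬ p ∣ a (f r) := fun r =>
    hp.prime.not_dvd_of_pow_eq_prod (Nat.not_dvd_half_add hpa1 hk heven) hgm (Finset.mem_univ r)
  have hle : ∀ r, a (f r) ≤ a k := fun r => ha.apply_le_of_forall_lt_of_not hkmin (hcop r)
  refine ⟨hcop, hle, ?_⟩
  have hlt : a k < (a ⟨0, hn⟩ + a k) / 2 := by
    have hk_le : a k ≤ a ⟨0, hn⟩ := ha (Fin.mk_le_of_le_val (Nat.zero_le _))
    have hk_ne : a k ≠ a ⟨0, hn⟩ := fun h => hk (h ▸ hpa1)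
    omega
  have hprod := Finset.prod_lt_pow_card_of_le_of_lt (Finset.univ_nonempty_iff.mpr ⟨⟨0, hm⟩⟩)
    (fun r _ => hle r) hlt
  rw [Finset.card_univ, Fintype.card_fin, ← hgm] at hprod
  exact lt_irrefl _ hprod

theorem stmt_12 (n : ℕ) (hn : 0 < n) (a : Fin n → ℕ) (hpos : ∀ i, 0 < a i)
    (hanti : ∀ i j : Fin n, i ≤ j → a j ≤ a i)
    (hgcd : Finset.univ.gcd a = 1) (ha1 : 2 ≤ a ⟨0, hn⟩)
    (p : ℕ) (hp : p.Prime) (hpa1 : p ∣ a ⟨0, hn⟩)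
    (k : Fin n) (hk : ¬ p ∣ a k) (hkmin : ∀ i : Fin n, i < k → p ∣ a i)
    (m : ℕ) (hm : 1 ≤ m) (f : Fin m → Fin n)
    (heven : 2 ∣ a ⟨0, hn⟩ + a k)
    (hgm : ((a ⟨0, hn⟩ + a k) / 2) ^ m = ∏ r : Fin m, a (f r)) :
    (∀ r : Fin m, ¬ p ∣ a (f r)) ∧ (∀ r : Fin m, a (f r) ≤ a k) ∧ False :=
  stmt_12_general n hn a hanti p hp hpa1 k hk hkmin m hm f heven hgm
end

section
/- Let S be a finite set of points in the plane such that any two distinct points of S are at distance at least 1, and let R be an a × b axis-parallel rectangle with a, b ≥ 1/2. Then |S ∩ R| ≤ 20·a·b. -/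
/-!
Cut space into the grid of cubes of side `1 / √n` anchored at the lower corner of the box.
A cube has diameter less than `1`, so it holds at most one point of a `1`-separated set, and a
box of side lengths `ℓᵢ` meets at most `∏ (√n ℓᵢ + 1)` cubes. In the plane this is
`(√2 a + 1)(√2 b + 1) ≤ 16 a b` as soon as `a, b ≥ 1/2`.
-/

open Finset

namespace GridPacking

variable {ι : Type*} [Fintype ι]

noncomputable def gridCell (c : ℝ) (o : ι → ℝ) (p : EuclideanSpace ℝ ι) : ι → ℤ :=
  fun i => ⌊c * (p i - o i)⌋

lemma abs_sub_lt_of_floor_mul_eq {c x y : ℝ} (hc : 0 < c) (h : ⌊c * x⌋ = ⌊c * y⌋) :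
    |x - y| < 1 / c := by
  have h1 := Int.abs_sub_lt_one_of_floor_eq_floor h
  rw [← mul_sub, abs_mul, abs_of_pos hc] at h1
  rwa [lt_div_iff₀ hc, mul_comm]

lemma dist_lt_of_gridCell_eq [Nonempty ι] {c : ℝ} (hc : 0 < c) {o : ι → ℝ}
    {p q : EuclideanSpace ℝ ι} (h : gridCell c o p = gridCell c o q) :
    dist p q < √(Fintype.card ι) / c := by
  have hcoord : ∀ i, dist (p i) (q i) ^ 2 < (1 / c) ^ 2 := fun i => by
    have := abs_sub_lt_of_floor_mul_eq hc (x := p i - o i) (y := q i - o i) (congrFun h i)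
    rw [sub_sub_sub_cancel_right] at this
    rw [Real.dist_eq]
    gcongr
  have hsum : ∑ i, dist (p i) (q i) ^ 2 < Fintype.card ι * (1 / c) ^ 2 := by
    simpa using Finset.sum_lt_sum_of_nonempty univ_nonempty fun i _ => hcoord i
  rw [EuclideanSpace.dist_eq, div_eq_mul_one_div, ← Real.sqrt_sq (by positivity : 0 ≤ 1 / c),
    ← Real.sqrt_mul (Nat.cast_nonneg _)]
  exact Real.sqrt_lt_sqrt (by positivity) hsum

lemma injOn_gridCell {S : Set (EuclideanSpace ℝ ι)}
    (hS : ∀ p ∈ S, ∀ q ∈ S, p ≠ q → 1 ≤ dist p q) (o : ι → ℝ) :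
    S.InjOn (gridCell √(Fintype.card ι) o) := by
  intro p hp q hq hpq
  by_contra hne
  have : Nonempty ι := by
    by_contra hempty
    exact hne (PiLp.ext fun i => (not_nonempty_iff.mp hempty).elim i)
  have hc : 0 < √(Fintype.card ι : ℝ) := Real.sqrt_pos.mpr (by exact_mod_cast Fintype.card_pos)
  have hdist := dist_lt_of_gridCell_eq hc hpq
  rw [div_self hc.ne'] at hdist
  exact (hS p hp q hq hne).not_gt hdist

lemma gridCell_mem_piFinset [DecidableEq ι] {c : ℝ} (hc : 0 ≤ c) {o len : ι → ℝ}
    {p : EuclideanSpace ℝ ι} (hp : ∀ i, o i ≤ p i ∧ p i ≤ o i + len i) :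
    gridCell c o p ∈ Fintype.piFinset fun i => Icc 0 ⌊c * len i⌋ := by
  simp only [Fintype.mem_piFinset, mem_Icc, gridCell]
  intro i
  obtain ⟨hlo, hhi⟩ := hp i
  exact ⟨Int.floor_nonneg.mpr (mul_nonneg hc (sub_nonneg.mpr hlo)),
    Int.floor_le_floor (mul_le_mul_of_nonneg_left (by linarith) hc)⟩

lemma card_Icc_zero_floor_le {x : ℝ} (hx : 0 ≤ x) : ((Icc 0 ⌊x⌋).card : ℝ) ≤ x + 1 := by
  rw [Int.card_Icc, sub_zero, ← Int.cast_natCast, Int.toNat_of_nonneg (by positivity)]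
  push_cast
  linarith [Int.floor_le x]

theorem ncard_inter_box_le (S : Finset (EuclideanSpace ℝ ι))
    (hS : ∀ p ∈ S, ∀ q ∈ S, p ≠ q → 1 ≤ dist p q) (o len : ι → ℝ) (hlen : ∀ i, 0 ≤ len i) :
    ((S : Set (EuclideanSpace ℝ ι)) ∩ {p | ∀ i, o i ≤ p i ∧ p i ≤ o i + len i}).ncard ≤
      ∏ i, (√(Fintype.card ι) * len i + 1) := by
  classical
  set c := √(Fintype.card ι : ℝ)
  have hfilter : (S : Set (EuclideanSpace ℝ ι)) ∩ {p | ∀ i, o i ≤ p i ∧ p i ≤ o i + len i} =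
      ↑(S.filter fun p => ∀ i, o i ≤ p i ∧ p i ≤ o i + len i) := by
    ext p; simp
  rw [hfilter, Set.ncard_coe_finset]
  have hcard := card_le_card_of_injOn (gridCell c o)
    (t := Fintype.piFinset fun i => Icc 0 ⌊c * len i⌋)
    (fun p hp => gridCell_mem_piFinset (Real.sqrt_nonneg _) (mem_filter.mp hp).2)
    ((injOn_gridCell (by simpa using hS) o).mono fun p hp => (mem_filter.mp hp).1)
  rw [Fintype.card_piFinset] at hcard
  calc _ ≤ ((∏ i, (Icc 0 ⌊c * len i⌋).card : ℕ) : ℝ) := by exact_mod_cast hcard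
    _ ≤ ∏ i, (c * len i + 1) := by
      push_cast
      exact prod_le_prod (fun _ _ => Nat.cast_nonneg _)
        fun i _ => card_Icc_zero_floor_le (mul_nonneg (Real.sqrt_nonneg _) (hlen i))

end GridPacking

theorem stmt_14 (S : Finset (EuclideanSpace ℝ (Fin 2)))
    (hS : ∀ P ∈ S, ∀ Q ∈ S, P ≠ Q → 1 ≤ dist P Q)
    (a b x₀ y₀ : ℝ) (ha : 1/2 ≤ a) (hb : 1/2 ≤ b)
    (R : Set (EuclideanSpace ℝ (Fin 2)))
    (hR : R = {p | x₀ ≤ p 0 ∧ p 0 ≤ x₀ + a ∧ y₀ ≤ p 1 ∧ p 1 ≤ y₀ + b}) :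
    ((↑S ∩ R : Set (EuclideanSpace ℝ (Fin 2))).ncard : ℝ) ≤ 20 * a * b := by
  have hbox : R = {p | ∀ i, ![x₀, y₀] i ≤ p i ∧ p i ≤ ![x₀, y₀] i + ![a, b] i} := by
    simp only [hR, Fin.forall_fin_two, Matrix.cons_val_zero, Matrix.cons_val_one, and_assoc]
  have hcount := GridPacking.ncard_inter_box_le S hS ![x₀, y₀] ![a, b]
    (fun i => by fin_cases i <;> simp <;> linarith)
  rw [← hbox, Fin.prod_univ_two, Fintype.card_fin, Nat.cast_ofNat] at hcount
  have hsqrt2 : √2 ≤ (3 / 2 : ℝ) := by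
    rw [Real.sqrt_le_left (by norm_num)]; norm_num
  have side_le : ∀ t : ℝ, 1 / 2 ≤ t → √2 * t + 1 ≤ 4 * t := fun t ht => by
    nlinarith [mul_le_mul_of_nonneg_right hsqrt2 (by linarith : 0 ≤ t)]
  calc _ ≤ (√2 * a + 1) * (√2 * b + 1) := hcount
    _ ≤ (4 * a) * (4 * b) :=
      mul_le_mul (side_le a ha) (side_le b hb) (by positivity) (by linarith)
    _ ≤ 20 * a * b := by nlinarith
end

section
/- Let n > 1 and let S be a set of n points in the plane with pairwise distances at least 1. Then there exists a line ℓ disjoint from S such that ℓ separates S (some segment between two points of S crosses ℓ) and every point of S is at distance at least 0.01·n^{−1/3} from ℓ. -/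
/-!
Suppose every line separating `S` passes within `δ` of a point of `S`, and let `AB` be a
diameter of `S`, of length `D ≥ 1`. In coordinates `X` along `AB` and `Y` across it, every line
`X = t` with `0 < t < D` separates `A` from `B`, so every strip `|X - t| < δ` contains a point
of `S`. The disjoint strips around `X = 2δj` give `D ≤ 2δ(n + 1)`. Since `S` lies in the disc
of radius `D` about `B`, the points with `X < 7/5` satisfy `Y² < 3D`; a grid of squares of side
`7/10` holds at most one point per square, hence about `6√D` of them, while the strips with
`2δj < 1` need about `1/(2δ)` of them. So `δ√D` is bounded below, and with `D ≲ 3δn` this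
bounds `δ³n` below, which fails for `δ = 0.01 n^(-1/3)`.
-/

open Finset Module
open scoped InnerProductSpace EuclideanSpace

theorem Nat.abs_sub_lt_one_of_floor_eq_floor {R : Type*} [Ring R] [LinearOrder R]
    [IsStrictOrderedRing R] [FloorRing R] {x y : R} (hx : 0 ≤ x) (hy : 0 ≤ y)
    (h : ⌊x⌋₊ = ⌊y⌋₊) : |x - y| < 1 := by
  apply Int.abs_sub_lt_one_of_floor_eq_floor
  rw [← Int.natCast_floor_eq_floor hx, ← Int.natCast_floor_eq_floor hy, h]

section Counting

variable {α : Type*}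

theorem le_two_mul_mul_card_add_one_of_forall_exists_near (f : α → ℝ) (S : Finset α)
    {δ L : ℝ} (hδ : 0 < δ) (hnear : ∀ t, 0 < t → t < L → ∃ P ∈ S, |f P - t| < δ) :
    L ≤ 2 * δ * (#S + 1) := by
  set m := ⌈L / (2 * δ)⌉₊
  -- A point near the line `f = 2δj` recovers `j` by rounding `f P / (2δ)`.
  have hsub : Icc 1 (m - 1) ⊆ S.image fun P => ⌊f P / (2 * δ) + 1 / 2⌋₊ := by
    intro j hj
    rw [mem_Icc] at hj
    have hj1 : (1 : ℝ) ≤ j := by exact_mod_cast hj.1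
    have hjL : 2 * δ * j < L := by
      have : (j : ℝ) < L / (2 * δ) := Nat.lt_ceil.1 (by omega)
      rwa [lt_div_iff₀ (by positivity), mul_comm] at this
    obtain ⟨P, hP, hPj⟩ := hnear (2 * δ * j) (by positivity) hjL
    have hround : |f P / (2 * δ) - j| < 1 / 2 := by
      rw [show f P / (2 * δ) - j = (f P - 2 * δ * j) / (2 * δ) by field_simp,
        abs_div, abs_of_pos (by positivity : (0 : ℝ) < 2 * δ), div_lt_iff₀ (by positivity)]
      linarith
    obtain ⟨hlo, hhi⟩ := abs_sub_lt_iff.1 hround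
    exact mem_image.2 ⟨P, hP, (Nat.floor_eq_iff (by linarith)).2 ⟨by linarith, by linarith⟩⟩
  have hm : m ≤ #S + 1 := by
    have := (card_le_card hsub).trans card_image_le
    simp only [Nat.card_Icc] at this
    omega
  calc L = 2 * δ * (L / (2 * δ)) := by field_simp
    _ ≤ 2 * δ * (#S + 1) := by
      gcongr
      exact (Nat.le_ceil _).trans (by exact_mod_cast hm)

theorem card_le_mul_of_one_le_dist_of_mem_box [PseudoMetricSpace α] (X Y : α → ℝ)
    (hXY : ∀ P Q, dist P Q ^ 2 ≤ (X P - X Q) ^ 2 + (Y P - Y Q) ^ 2) (T : Finset α)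
    (hT : ∀ P ∈ T, ∀ Q ∈ T, P ≠ Q → 1 ≤ dist P Q) {x₀ y₀ : ℝ} {a b : ℕ}
    (hX : ∀ P ∈ T, X P ∈ Set.Ico x₀ (x₀ + 7 / 10 * a))
    (hY : ∀ P ∈ T, Y P ∈ Set.Ico y₀ (y₀ + 7 / 10 * b)) :
    #T ≤ a * b := by
  set cell : α → ℕ × ℕ := fun P => (⌊(X P - x₀) / (7 / 10)⌋₊, ⌊(Y P - y₀) / (7 / 10)⌋₊)
  have hmaps : ∀ P ∈ T, cell P ∈ range a ×ˢ range b := by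
    intro P hP
    obtain ⟨hX₀, hX₁⟩ := hX P hP
    obtain ⟨hY₀, hY₁⟩ := hY P hP
    simp only [cell, mem_product, mem_range]
    constructor <;> rw [Nat.floor_lt (by linarith), div_lt_iff₀ (by norm_num)] <;> linarith
  -- The side 7/10 is chosen so that 2 * (7/10)^2 < 1: two points in one cell are at distance < 1.
  have hcell : ∀ {x y c : ℝ}, c ≤ x → c ≤ y → ⌊(x - c) / (7 / 10)⌋₊ = ⌊(y - c) / (7 / 10)⌋₊ →
      (x - y) ^ 2 < 49 / 100 := by
    intro x y c hx hy h
    have := Nat.abs_sub_lt_one_of_floor_eq_floor (div_nonneg (sub_nonneg.2 hx) (by norm_num))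
      (div_nonneg (sub_nonneg.2 hy) (by norm_num)) h
    rw [← sub_div, sub_sub_sub_cancel_right, abs_div, abs_of_pos (by norm_num : (0 : ℝ) < 7 / 10),
      div_lt_one (by norm_num)] at this
    nlinarith [sq_abs (x - y), abs_nonneg (x - y)]
  have hinj : Set.InjOn cell T := by
    intro P hP Q hQ hPQ
    by_contra hne
    obtain ⟨hXP, hYP⟩ := Prod.ext_iff.1 hPQ
    have hdist := hXY P Q
    have := hcell (hX P hP).1 (hX Q hQ).1 hXP
    have := hcell (hY P hP).1 (hY Q hQ).1 hYP
    nlinarith [hT P hP Q hQ hne]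
  simpa using card_le_card_of_injOn cell hmaps hinj

theorem one_div_two_thousand_lt_of_forall_exists_near [PseudoMetricSpace α] (X Y : α → ℝ)
    (hXY : ∀ P Q, dist P Q ^ 2 ≤ (X P - X Q) ^ 2 + (Y P - Y Q) ^ 2) (S : Finset α)
    (hS : ∀ P ∈ S, ∀ Q ∈ S, P ≠ Q → 1 ≤ dist P Q) (hcard : 2 ≤ #S) {D δ : ℝ} (hD : 1 ≤ D)
    (hδ0 : 0 < δ) (hδ : δ ≤ 1 / 100) (hparab : ∀ P ∈ S, X P ^ 2 + Y P ^ 2 ≤ 2 * D * X P)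
    (hnear : ∀ t, 0 < t → t < D → ∃ P ∈ S, |X P - t| < δ) :
    1 / 2000 < δ ^ 3 * #S := by
  have hX₀ : ∀ P ∈ S, 0 ≤ X P := fun P hP =>
    (mul_nonneg_iff_of_pos_left (by positivity : (0 : ℝ) < 2 * D)).1
      ((add_nonneg (sq_nonneg _) (sq_nonneg _)).trans (hparab P hP))
  set T := S.filter fun P => X P < 7 / 5
  have hlocal : 1 ≤ 2 * δ * (#T + 1) := by
    refine le_two_mul_mul_card_add_one_of_forall_exists_near X T hδ0 fun t ht0 ht1 => ?_
    obtain ⟨P, hP, hPt⟩ := hnear t ht0 (by linarith)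
    refine ⟨P, mem_filter.2 ⟨hP, ?_⟩, hPt⟩
    linarith [(abs_sub_lt_iff.1 hPt).1]
  set h := √(3 * D)
  set b := ⌈h / (7 / 10)⌉₊
  have hT : #T ≤ 2 * (2 * b) := by
    have hb : h ≤ 7 / 10 * b := by
      have := Nat.le_ceil (h / (7 / 10))
      rwa [div_le_iff₀ (by norm_num), mul_comm] at this
    refine card_le_mul_of_one_le_dist_of_mem_box X Y hXY T
      (fun P hP Q hQ => hS P (mem_filter.1 hP).1 Q (mem_filter.1 hQ).1) (x₀ := 0)
      (y₀ := -(7 / 10 * b)) (fun P hP => ?_) (fun P hP => ?_)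
    · obtain ⟨hPS, hPX⟩ := mem_filter.1 hP
      exact ⟨hX₀ P hPS, by push_cast; linarith⟩
    · obtain ⟨hPS, hPX⟩ := mem_filter.1 hP
      have hY : |Y P| < h := by
        rw [Real.lt_sqrt (abs_nonneg _), sq_abs]
        nlinarith [hparab P hPS, hX₀ P hPS, sq_nonneg (X P)]
      obtain ⟨hY₀, hY₁⟩ := abs_lt.1 hY
      constructor <;> push_cast <;> linarith
  have hb : (b : ℝ) < 10 / 7 * h + 1 := by
    calc (b : ℝ) < h / (7 / 10) + 1 := Nat.ceil_lt_add_one (by positivity)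
      _ = 10 / 7 * h + 1 := by ring
  have hδh : 63 / 800 < δ * h := by
    have hT' : (#T : ℝ) ≤ 4 * b := by exact_mod_cast (by omega : #T ≤ 4 * b)
    have : 1 < 2 * δ * (40 / 7 * h + 5) := by
      calc (1 : ℝ) ≤ 2 * δ * (#T + 1) := hlocal
        _ ≤ 2 * δ * (4 * b + 1) := by gcongr
        _ < 2 * δ * (40 / 7 * h + 5) := mul_lt_mul_of_pos_left (by linarith) (by positivity)
    linarith
  have hsq : (63 / 800) ^ 2 < δ ^ 2 * (3 * D) := by
    calc ((63 : ℝ) / 800) ^ 2 < (δ * h) ^ 2 := by gcongr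
      _ = δ ^ 2 * (3 * D) := by rw [mul_pow, Real.sq_sqrt (by positivity)]
  have hglobal : D ≤ 3 * δ * #S := by
    have := le_two_mul_mul_card_add_one_of_forall_exists_near X S hδ0 hnear
    have hS2 : (2 : ℝ) ≤ #S := by exact_mod_cast hcard
    nlinarith
  have := mul_le_mul_of_nonneg_left hglobal (sq_nonneg δ)
  nlinarith

section Plane

variable {E : Type*} [NormedAddCommGroup E] [InnerProductSpace ℝ E]

theorem norm_sub_sq_le_two_mul_inner_of_dist_le {A B P : E} (h : dist P B ≤ dist A B) :
    ‖P - A‖ ^ 2 ≤ 2 * ⟪B - A, P - A⟫_ℝ := by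
  have hPB : ‖P - B‖ ^ 2 = ‖P - A‖ ^ 2 - 2 * ⟪P - A, B - A⟫_ℝ + ‖B - A‖ ^ 2 := by
    rw [← norm_sub_sq_real, sub_sub_sub_cancel_right]
  rw [dist_eq_norm, dist_eq_norm, norm_sub_rev A] at h
  have := pow_le_pow_left₀ (norm_nonneg _) h 2
  rw [real_inner_comm]
  linarith

theorem one_div_two_thousand_lt_of_forall_separating_exists_near [Fact (finrank ℝ E = 2)]
    (S : Finset E) (hS : ∀ P ∈ S, ∀ Q ∈ S, P ≠ Q → 1 ≤ dist P Q) (hcard : 2 ≤ #S) {δ : ℝ}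
    (hδ0 : 0 < δ) (hδ : δ ≤ 1 / 100)
    (hnear : ∀ (u : E) (c : ℝ), u ≠ 0 → (∃ P ∈ S, ∃ Q ∈ S, ⟪u, P⟫_ℝ < c ∧ c < ⟪u, Q⟫_ℝ) →
      ∃ P ∈ S, |⟪u, P⟫_ℝ - c| / ‖u‖ < δ) :
    1 / 2000 < δ ^ 3 * #S := by
  have hne : S.Nonempty := card_pos.1 (by omega)
  obtain ⟨⟨A, B⟩, hAB, hmax⟩ :=
    (S ×ˢ S).exists_max_image (fun p => dist p.1 p.2) (hne.product hne)
  obtain ⟨hA, hB⟩ := mem_product.1 hAB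
  set D := dist A B
  have hD : 1 ≤ D := by
    obtain ⟨P, hP, Q, hQ, hPQ⟩ := one_lt_card.1 hcard
    exact (hS P hP Q hQ hPQ).trans (hmax (P, Q) (mem_product.2 ⟨hP, hQ⟩))
  have : FiniteDimensional ℝ E := .of_fact_finrank_eq_two
  -- Any orientation will do: it only supplies the coordinate `o.areaForm e` across `AB`.
  let o : Orientation ℝ E (Fin 2) := (finBasisOfFinrankEq ℝ E Fact.out).orientation
  set e : E := D⁻¹ • (B - A)
  have hBA : B - A = D • e := by
    rw [smul_smul, mul_inv_cancel₀ (by positivity), one_smul]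
  have he : ‖e‖ = 1 := by
    rw [norm_smul, ← dist_eq_norm', norm_inv, Real.norm_of_nonneg (by positivity),
      inv_mul_cancel₀ (by positivity)]
  have hXB : ⟪e, B - A⟫_ℝ = D := by
    rw [hBA, real_inner_smul_right, real_inner_self_eq_norm_sq, he, one_pow, mul_one]
  refine one_div_two_thousand_lt_of_forall_exists_near (fun P => ⟪e, P - A⟫_ℝ)
    (fun P => o.areaForm e (P - A)) (fun P Q => ?_) S hS hcard hD hδ0 hδ (fun P hP => ?_)
    (fun t ht0 htD => ?_)
  · rw [← inner_sub_right, ← map_sub, sub_sub_sub_cancel_right, o.inner_sq_add_areaForm_sq, he,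
      one_pow, one_mul, dist_eq_norm]
  · rw [o.inner_sq_add_areaForm_sq, he, one_pow, one_mul]
    calc ‖P - A‖ ^ 2 ≤ 2 * ⟪B - A, P - A⟫_ℝ :=
          norm_sub_sq_le_two_mul_inner_of_dist_le (hmax (P, B) (mem_product.2 ⟨hP, hB⟩))
      _ = 2 * D * ⟪e, P - A⟫_ℝ := by rw [hBA, real_inner_smul_left, mul_assoc]
  · have hsep : ∃ P ∈ S, ∃ Q ∈ S, ⟪e, P⟫_ℝ < ⟪e, A⟫_ℝ + t ∧ ⟪e, A⟫_ℝ + t < ⟪e, Q⟫_ℝ := by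
      refine ⟨A, hA, B, hB, by linarith, ?_⟩
      rw [inner_sub_right] at hXB
      linarith
    obtain ⟨P, hP, hPt⟩ := hnear e _ (norm_ne_zero_iff.1 (by rw [he]; exact one_ne_zero)) hsep
    refine ⟨P, hP, ?_⟩
    rwa [he, div_one, ← sub_sub, ← inner_sub_right] at hPt

end Plane

theorem stmt_15 (n : ℕ) (hn : 1 < n) (S : Finset (EuclideanSpace ℝ (Fin 2)))
    (hcard : S.card = n)
    (hS : ∀ P ∈ S, ∀ Q ∈ S, P ≠ Q → 1 ≤ dist P Q) :
    -- There is a line ℓ = {x | ⟪u, x⟫ = c}, disjoint from S, separating S,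
    -- with every point of S at distance ≥ 0.01 n^{-1/3} from ℓ.
    ∃ (u : EuclideanSpace ℝ (Fin 2)) (c : ℝ), u ≠ 0 ∧
      (∃ P ∈ S, ∃ Q ∈ S, (inner ℝ u P : ℝ) < c ∧ c < (inner ℝ u Q : ℝ)) ∧
      (∀ P ∈ S, 0.01 * (n : ℝ) ^ (-(1/3) : ℝ) ≤ |(inner ℝ u P : ℝ) - c| / ‖u‖) := by
  by_contra hcon
  push Not at hcon
  have hn0 : (0 : ℝ) < n := by positivity
  have hδ : 0.01 * (n : ℝ) ^ (-(1/3) : ℝ) ≤ 1 / 100 := by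
    have : (n : ℝ) ^ (-(1/3) : ℝ) ≤ 1 :=
      Real.rpow_le_one_of_one_le_of_nonpos (by exact_mod_cast hn.le) (by norm_num)
    linarith
  have hδn : (0.01 * (n : ℝ) ^ (-(1/3) : ℝ)) ^ 3 * n = 1 / 1000000 := by
    have hcube : ((n : ℝ) ^ (-(1/3) : ℝ)) ^ 3 * n = 1 := by
      rw [← Real.rpow_natCast, ← Real.rpow_mul hn0.le, ← Real.rpow_add_one hn0.ne']
      norm_num
    linear_combination 0.01 ^ 3 * hcube
  have := one_div_two_thousand_lt_of_forall_separating_exists_near S hS (hcard ▸ hn)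
    (by positivity) hδ hcon
  rw [hcard, hδn] at this
  norm_num at this
end Counting
end
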